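/- arXiv:2001.04656 — 17 statements merged into one kernel-verified Lean document; each statement's English description precedes it below -/
import Mathlib

section
/- For a lattice L with at least two elements and any n ≥ 2, the multiplication of n×n matrices over L, defined by (AB)_{ij} = ⋁_{k=1}^n (a_{ik} ∧ b_{kj}), is associative if and only if L is a distributive lattice. -/
/-- Multiplication of `n × n` matrices over a lattice `L`:
`(A * B) i j = ⨆ k, (A i k ⊓ B k j)` (a finite join, which exists since `n ≠ 0`). -/
def latMatMul {L : Type*} [Lattice L] {n : ℕ} [NeZero n]
    (A B : Matrix (Fin n) (Fin n) L) : Matrix (Fin n) (Fin n) L :=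
  Matrix.of fun i j => Finset.univ.sup' Finset.univ_nonempty fun k => A i k ⊓ B k j

private theorem sup'_ite_eq {L : Type*} [Lattice L] {n : ℕ} [NeZero n] (hn : 2 ≤ n)
    (x y : L) :
    (Finset.univ.sup' Finset.univ_nonempty fun k : Fin n => if k = 0 then x else y) = x ⊔ y := by
  have hone : (⟨1, by omega⟩ : Fin n) ≠ 0 := by
    intro hcontra
    have := congrArg Fin.val hcontra
    simp at this
  apply le_antisymm
  · apply Finset.sup'_le
    intro k _
    by_cases hk : k = 0 <;> simp [hk]
  · apply sup_le
    · have := Finset.le_sup' (b := (0 : Fin n))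
        (fun k : Fin n => if k = 0 then x else y) (Finset.mem_univ _)
      simpa using this
    · have := Finset.le_sup' (b := (⟨1, by omega⟩ : Fin n))
        (fun k : Fin n => if k = 0 then x else y) (Finset.mem_univ _)
      simpa [hone] using this

/-- For a lattice `L` with at least two elements and any `n ≥ 2`, multiplication of
`n × n` matrices over `L` is associative if and only if `L` is distributive. -/
theorem latMatMul_assoc_iff_distrib {L : Type*} [Lattice L] [Nontrivial L]
    {n : ℕ} [NeZero n] (hn : 2 ≤ n) :
    (∀ A B C : Matrix (Fin n) (Fin n) L,
        latMatMul (latMatMul A B) C = latMatMul A (latMatMul B C)) ↔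
      (∀ a b c : L, a ⊓ (b ⊔ c) = (a ⊓ b) ⊔ (a ⊓ c)) := by
  constructor
  · intro h a b c
    set s := a ⊓ b ⊓ c with hs
    set t := a ⊔ b ⊔ c with ht
    have hsa : s ≤ a := inf_le_left.trans inf_le_left
    have hsb : s ≤ b := inf_le_left.trans inf_le_right
    have hsc : s ≤ c := inf_le_right
    have hat : a ≤ t := le_sup_left.trans' le_sup_left
    have hbt : b ≤ t := le_sup_left.trans' le_sup_right
    have hct : c ≤ t := le_sup_right
    set A : Matrix (Fin n) (Fin n) L := fun _ k => if k = 0 then a else s with hA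
    set B : Matrix (Fin n) (Fin n) L :=
      fun k l => if k = 0 then (if l = 0 then b else c) else s with hB
    set C : Matrix (Fin n) (Fin n) L := fun _ _ => t with hC
    have hmain := congrFun (congrFun (h A B C) 0) 0
    -- compute AB
    have hAB : ∀ l : Fin n, latMatMul A B 0 l = a ⊓ (if l = 0 then b else c) := by
      intro l
      have : (fun k : Fin n => A 0 k ⊓ B k l)
          = fun k : Fin n => if k = 0 then a ⊓ (if l = 0 then b else c) else s := by
        funext k
        by_cases hk : k = 0 <;> simp [hA, hB, hk]
      rw [latMatMul, Matrix.of_apply, this, sup'_ite_eq hn]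
      refine sup_eq_left.mpr (le_inf hsa ?_)
      by_cases hl : l = 0 <;> simp [hl, hsb, hsc]
    -- compute BC
    have hBC : ∀ k : Fin n, latMatMul B C k 0 = if k = 0 then b ⊔ c else s := by
      intro k
      have : (fun l : Fin n => B k l ⊓ C l 0)
          = fun l : Fin n => if k = 0 then (if l = 0 then b ⊓ t else c ⊓ t) else s ⊓ t := by
        funext l
        by_cases hk : k = 0 <;> by_cases hl : l = 0 <;> simp [hB, hC, hk, hl]
      rw [latMatMul, Matrix.of_apply, this]
      by_cases hk : k = 0
      · simp only [hk, if_true]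
        rw [inf_eq_left.mpr hbt, inf_eq_left.mpr hct, sup'_ite_eq hn]
      · simp only [hk, if_false]
        rw [Finset.sup'_const, inf_eq_left.mpr (hsa.trans hat)]
    -- left side
    have hL : latMatMul (latMatMul A B) C 0 0 = (a ⊓ b) ⊔ (a ⊓ c) := by
      rw [latMatMul, Matrix.of_apply]
      have : (fun l : Fin n => latMatMul A B 0 l ⊓ C l 0)
          = fun l : Fin n => if l = 0 then a ⊓ b else a ⊓ c := by
        funext l
        rw [hAB l]
        by_cases hl : l = 0 <;>
          simp [hC, hl, inf_eq_left.mpr ((inf_le_left.trans hat) : a ⊓ b ≤ t),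
            inf_eq_left.mpr ((inf_le_left.trans hat) : a ⊓ c ≤ t)]
      rw [this, sup'_ite_eq hn]
    -- right side
    have hR : latMatMul A (latMatMul B C) 0 0 = a ⊓ (b ⊔ c) := by
      rw [latMatMul, Matrix.of_apply]
      have : (fun k : Fin n => A 0 k ⊓ latMatMul B C k 0)
          = fun k : Fin n => if k = 0 then a ⊓ (b ⊔ c) else s := by
        funext k
        rw [hBC k]
        by_cases hk : k = 0 <;> simp [hA, hk]
      rw [this, sup'_ite_eq hn]
      exact sup_eq_left.mpr (le_inf hsa (hsb.trans le_sup_left))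
    rw [hL, hR] at hmain
    exact hmain.symm
  · intro hd A B C
    letI : DistribLattice L := DistribLattice.ofInfSupLe (fun a b c => (hd a b c).le)
    funext i j
    show Finset.univ.sup' Finset.univ_nonempty
          (fun l => (Finset.univ.sup' Finset.univ_nonempty fun k => A i k ⊓ B k l) ⊓ C l j)
        = Finset.univ.sup' Finset.univ_nonempty
          (fun k => A i k ⊓ Finset.univ.sup' Finset.univ_nonempty fun l => B k l ⊓ C l j)
    simp_rw [Finset.sup'_inf_distrib_right, Finset.sup'_inf_distrib_left, ← inf_assoc]
    exact Finset.sup'_comm _ _ _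
end

section
/- Let (G, ·) be a magma with a two-sided identity element. If · is not associative, then · is antiassociative: for every n, any two distinct bracketings of size n induce different n-ary term functions on G. Consequently, a binary operation with an identity element is either associative or antiassociative. -/
/-- A bracketing of size `n`: a full binary tree with `n` leaves, i.e. a way of
inserting parentheses into a product `x₁ ⋯ xₙ`. -/
inductive Bracketing : ℕ → Type
  | leaf : Bracketing 1
  | node : ∀ {m k : ℕ}, Bracketing m → Bracketing k → Bracketing (m + k)

/-- The `n`-ary term function induced by a bracketing on a magma `(G, mul)`:
multiply the arguments `x 0, …, x (n-1)` in order according to the tree. -/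
def Bracketing.eval {G : Type*} (mul : G → G → G) :
    ∀ {m : ℕ}, Bracketing m → (Fin m → G) → G
  | _, .leaf, x => x 0
  | _, .node l r, x =>
      mul (l.eval mul fun i => x (Fin.castAdd _ i)) (r.eval mul fun i => x (Fin.natAdd _ i))

namespace AntiAssocAux

theorem bpos : ∀ {n}, Bracketing n → 1 ≤ n := by
  intro n b
  induction b with
  | leaf => exact le_refl 1
  | node l r ihl ihr => omega

theorem casesAux {n : ℕ} (b : Bracketing n) :
    (n = 1 ∧ HEq b Bracketing.leaf) ∨
      ∃ (m k : ℕ) (l : Bracketing m) (r : Bracketing k),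
        m + k = n ∧ HEq b (Bracketing.node l r) := by
  cases b with
  | leaf => exact Or.inl ⟨rfl, HEq.rfl⟩
  | node l r => exact Or.inr ⟨_, _, l, r, rfl, HEq.rfl⟩

variable {G : Type*} (mul : G → G → G) (e : G)

theorem eval_heq {m n : ℕ} (h : m = n) (b : Bracketing m) (q : Bracketing n)
    (hq : HEq q b) (x : Fin n → G) :
    q.eval mul x = b.eval mul (fun i => x (Fin.cast h i)) := by
  subst h
  rw [eq_of_heq hq]
  rfl

variable (he : ∀ a : G, mul e a = a ∧ mul a e = a)
include he

theorem evalE : ∀ {m} (b : Bracketing m) (x : Fin m → G),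
    (∀ i, x i = e) → b.eval mul x = e := by
  intro m b
  induction b with
  | leaf => intro x hx; exact hx 0
  | node l r ihl ihr =>
    intro x hx
    simp only [Bracketing.eval]
    rw [ihl _ (fun i => hx _), ihr _ (fun i => hx _), (he e).1]

theorem evalB : ∀ {m} (b : Bracketing m) (x : Fin m → G) (j : ℕ) (a : G),
    j < m →
    (∀ i : Fin m, (i : ℕ) ≠ j → x i = e) →
    (∀ i : Fin m, (i : ℕ) = j → x i = a) →
    b.eval mul x = a := by
  intro m b
  induction b with
  | leaf =>
    intro x j a hj hne hja
    exact hja 0 (by omega)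
  | node l r ihl ihr =>
    rename_i m' k
    intro x j a hj hne hja
    simp only [Bracketing.eval]
    by_cases hjm : j < m'
    · rw [ihl _ j a hjm (fun i hi => hne _ (by simpa only [Fin.coe_natAdd, Fin.coe_castAdd, Fin.coe_cast] using hi))
        (fun i hi => hja _ (by simpa only [Fin.coe_natAdd, Fin.coe_castAdd, Fin.coe_cast] using hi))]
      rw [evalE mul e he r _ (fun i => hne _ (by simp only [Fin.coe_natAdd, Fin.coe_castAdd, Fin.coe_cast]; omega)), (he a).2]
    · rw [ihr _ (j - m') a (by omega)
        (fun i hi => hne _ (by simp only [Fin.coe_natAdd, Fin.coe_castAdd, Fin.coe_cast] at *; omega))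
        (fun i hi => hja _ (by simp only [Fin.coe_natAdd, Fin.coe_castAdd, Fin.coe_cast] at *; omega))]
      rw [evalE mul e he l _ (fun i => hne _ (by
        simp only [Fin.coe_castAdd]; have := i.isLt; omega)), (he a).1]

theorem evalC : ∀ {m} (b : Bracketing m) (x : Fin m → G) (j₁ j₂ : ℕ) (a b' : G),
    j₁ < j₂ → j₂ < m →
    (∀ i : Fin m, (i : ℕ) ≠ j₁ → (i : ℕ) ≠ j₂ → x i = e) →
    (∀ i : Fin m, (i : ℕ) = j₁ → x i = a) →
    (∀ i : Fin m, (i : ℕ) = j₂ → x i = b') →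
    b.eval mul x = mul a b' := by
  intro m b
  induction b with
  | leaf =>
    intro x j₁ j₂ a b' h12 h2 hne hj1 hj2
    omega
  | node l r ihl ihr =>
    rename_i m' k
    intro x j₁ j₂ a b' h12 h2 hne hj1 hj2
    simp only [Bracketing.eval]
    by_cases hc1 : j₂ < m'
    · -- both in left part
      rw [ihl _ j₁ j₂ a b' h12 hc1
        (fun i hi1 hi2 => hne _ (by simpa only [Fin.coe_natAdd, Fin.coe_castAdd, Fin.coe_cast] using hi1) (by simpa only [Fin.coe_natAdd, Fin.coe_castAdd, Fin.coe_cast] using hi2))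
        (fun i hi => hj1 _ (by simpa only [Fin.coe_natAdd, Fin.coe_castAdd, Fin.coe_cast] using hi))
        (fun i hi => hj2 _ (by simpa only [Fin.coe_natAdd, Fin.coe_castAdd, Fin.coe_cast] using hi))]
      rw [evalE mul e he r _ (fun i => hne _ (by simp only [Fin.coe_natAdd, Fin.coe_castAdd, Fin.coe_cast]; omega) (by simp only [Fin.coe_natAdd, Fin.coe_castAdd, Fin.coe_cast]; omega)),
        (he (mul a b')).2]
    · by_cases hc2 : m' ≤ j₁
      · -- both in right part
        rw [ihr _ (j₁ - m') (j₂ - m') a b' (by omega) (by omega)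
          (fun i hi1 hi2 => hne _ (by simp only [Fin.coe_natAdd, Fin.coe_castAdd, Fin.coe_cast] at *; omega) (by simp only [Fin.coe_natAdd, Fin.coe_castAdd, Fin.coe_cast] at *; omega))
          (fun i hi => hj1 _ (by simp only [Fin.coe_natAdd, Fin.coe_castAdd, Fin.coe_cast] at *; omega))
          (fun i hi => hj2 _ (by simp only [Fin.coe_natAdd, Fin.coe_castAdd, Fin.coe_cast] at *; omega))]
        rw [evalE mul e he l _ (fun i => hne _
          (by simp only [Fin.coe_castAdd]; have := i.isLt; omega)
          (by simp only [Fin.coe_castAdd]; have := i.isLt; omega)),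
          (he (mul a b')).1]
      · -- j₁ in left part, j₂ in right part
        rw [evalB mul e he l _ j₁ a (by omega)
          (fun i hi => hne _ (by simpa only [Fin.coe_natAdd, Fin.coe_castAdd, Fin.coe_cast] using hi)
            (by simp only [Fin.coe_castAdd]; have := i.isLt; omega))
          (fun i hi => hj1 _ (by simpa only [Fin.coe_natAdd, Fin.coe_castAdd, Fin.coe_cast] using hi))]
        rw [evalB mul e he r _ (j₂ - m') b' (by omega)
          (fun i hi => hne _ (by simp only [Fin.coe_natAdd, Fin.coe_castAdd, Fin.coe_cast]; omega) (by simp only [Fin.coe_natAdd, Fin.coe_castAdd, Fin.coe_cast] at *; omega))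
          (fun i hi => hj2 _ (by simp only [Fin.coe_natAdd, Fin.coe_castAdd, Fin.coe_cast] at *; omega))]

/-- The key asymmetric case: two nodes with different split points. -/
theorem asym {m₁ k₁ m₂ k₂ : ℕ} (l₁ : Bracketing m₁) (r₁ : Bracketing k₁)
    (l₂ : Bracketing m₂) (r₂ : Bracketing k₂) (h : m₁ + k₁ = m₂ + k₂)
    (hm : m₁ < m₂) (a b c : G) :
    ∃ x : Fin (m₁ + k₁) → G,
      (Bracketing.node l₁ r₁).eval mul x = mul a (mul b c) ∧
      (Bracketing.node l₂ r₂).eval mul (fun i => x (Fin.cast h.symm i)) =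
        mul (mul a b) c := by
  have hm₁ : 1 ≤ m₁ := bpos l₁
  have hk₂ : 1 ≤ k₂ := bpos r₂
  have hm₂n : m₂ < m₁ + k₁ := by omega
  set X : ℕ → G := fun j => if j = 0 then a else if j = m₁ then b else if j = m₂ then c else e
    with hX
  have hX0 : X 0 = a := by simp [hX]
  have hXm₁ : X m₁ = b := by
    rw [hX]; simp only []; rw [if_neg (by omega)]; simp
  have hXm₂ : X m₂ = c := by
    rw [hX]; simp only []; rw [if_neg (by omega), if_neg (by omega)]; simp
  have hXe : ∀ j, j ≠ 0 → j ≠ m₁ → j ≠ m₂ → X j = e := by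
    intro j h0 h1 h2; simp [hX, h0, h1, h2]
  refine ⟨fun i => X i.val, ?_, ?_⟩
  · simp only [Bracketing.eval]
    rw [evalB mul e he l₁ _ 0 a (by omega)
      (fun i hi => hXe _ (by simpa only [Fin.coe_natAdd, Fin.coe_castAdd, Fin.coe_cast] using hi)
        (by simp only [Fin.coe_castAdd]; have := i.isLt; omega)
        (by simp only [Fin.coe_castAdd]; have := i.isLt; omega))
      (fun i hi => by simp only [Fin.coe_castAdd]; rw [hi, hX0])]
    rw [evalC mul e he r₁ _ 0 (m₂ - m₁) b c (by omega) (by omega)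
      (fun i hi1 hi2 => hXe _ (by simp only [Fin.coe_natAdd, Fin.coe_castAdd, Fin.coe_cast]; omega) (by simp only [Fin.coe_natAdd, Fin.coe_castAdd, Fin.coe_cast] at *; omega)
        (by simp only [Fin.coe_natAdd, Fin.coe_castAdd, Fin.coe_cast] at *; omega))
      (fun i hi => by
        simp only [Fin.coe_natAdd] at hi ⊢
        have : m₁ + i.val = m₁ := by omega
        rw [this, hXm₁])
      (fun i hi => by
        simp only [Fin.coe_natAdd] at hi ⊢
        have : m₁ + i.val = m₂ := by omega
        rw [this, hXm₂])]
  · simp only [Bracketing.eval]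
    rw [evalC mul e he l₂ _ 0 m₁ a b (by omega) (by omega)
      (fun i hi1 hi2 => hXe _ (by simpa only [Fin.coe_natAdd, Fin.coe_castAdd, Fin.coe_cast] using hi1) (by simpa only [Fin.coe_natAdd, Fin.coe_castAdd, Fin.coe_cast] using hi2)
        (by simp only [Fin.coe_castAdd, Fin.coe_cast]; have := i.isLt; omega))
      (fun i hi => by simp only [Fin.coe_castAdd, Fin.coe_cast]; rw [hi]; exact hX0)
      (fun i hi => by simp only [Fin.coe_castAdd, Fin.coe_cast]; rw [hi]; exact hXm₁)]
    rw [evalB mul e he r₂ _ 0 c (by omega)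
      (fun i hi => hXe _ (by simp only [Fin.coe_natAdd, Fin.coe_castAdd, Fin.coe_cast]; omega) (by simp only [Fin.coe_natAdd, Fin.coe_castAdd, Fin.coe_cast]; omega)
        (by simp only [Fin.coe_natAdd, Fin.coe_castAdd, Fin.coe_cast] at *; omega))
      (fun i hi => by
        simp only [Fin.coe_natAdd, Fin.coe_cast] at hi ⊢
        have : m₂ + i.val = m₂ := by omega
        rw [this, hXm₂])]

end AntiAssocAux

open AntiAssocAux in
/-- If a magma `(G, mul)` has a two-sided identity element and `mul` is not associative,
then `mul` is antiassociative: for every `n`, any two distinct bracketings of size `n`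
induce different `n`-ary term functions on `G`. (Consequently a binary operation with an
identity element is either associative or antiassociative.) -/
theorem antiassociative_of_not_assoc_of_identity {G : Type*} (mul : G → G → G) (e : G)
    (he : ∀ a : G, mul e a = a ∧ mul a e = a)
    (hna : ¬ ∀ a b c : G, mul (mul a b) c = mul a (mul b c)) :
    ∀ (n : ℕ) (p q : Bracketing n), p ≠ q →
      ∃ x : Fin n → G, p.eval mul x ≠ q.eval mul x := by
  push_neg at hna
  obtain ⟨a, b, c, habc⟩ := hna
  intro n
  induction n using Nat.strong_induction_on with
  | _ n ih =>
    intro p q hpq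
    rcases casesAux p with ⟨h1, hp⟩ | ⟨m₁, k₁, l₁, r₁, h1, hp⟩
    · subst h1
      rcases casesAux q with ⟨_, hq⟩ | ⟨m, k, l, r, h2, hq⟩
      · exact absurd ((eq_of_heq hp).trans (eq_of_heq hq).symm) hpq
      · have := bpos l; have := bpos r; omega
    · subst h1
      have hp' : p = Bracketing.node l₁ r₁ := eq_of_heq hp
      subst hp'
      rcases casesAux q with ⟨h2, _⟩ | ⟨m₂, k₂, l₂, r₂, h2, hq⟩
      · have := bpos l₁; have := bpos r₁; omega
      · rcases lt_trichotomy m₁ m₂ with hm | hm | hm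
        · -- m₁ < m₂ : use asym
          obtain ⟨x, hx1, hx2⟩ := asym mul e he l₁ r₁ l₂ r₂ h2.symm hm a b c
          refine ⟨x, ?_⟩
          rw [hx1, eval_heq mul h2 (Bracketing.node l₂ r₂) q hq x, hx2]
          exact fun h => habc h.symm
        · -- m₁ = m₂ : same split, recurse
          subst hm
          have hk : k₂ = k₁ := by omega
          subst hk
          have hq' : q = Bracketing.node l₂ r₂ := eq_of_heq hq
          subst hq'
          by_cases hl : l₁ = l₂
          · subst hl
            have hr : r₁ ≠ r₂ := fun h => hpq (by rw [h])
            obtain ⟨x, hx⟩ := ih k₂ (by have := bpos l₁; omega) r₁ r₂ hr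
            refine ⟨fun i => if h : m₁ ≤ (i : ℕ) then x ⟨i - m₁, by have := i.isLt; omega⟩
              else e, ?_⟩
            have hleft : ∀ (r : Bracketing k₂),
                (Bracketing.node l₁ r).eval mul (fun i : Fin (m₁ + k₂) =>
                  if h : m₁ ≤ (i : ℕ) then x ⟨i - m₁, by have := i.isLt; omega⟩ else e)
                  = r.eval mul x := by
              intro r
              simp only [Bracketing.eval]
              rw [evalE mul e he l₁ _ (fun i => by
                rw [dif_neg]; simp only [Fin.coe_castAdd]; have := i.isLt; omega)]
              rw [(he _).1]
              congr 1
              funext i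
              rw [dif_pos (by simp only [Fin.coe_natAdd]; omega)]
              congr 1
              ext
              simp only [Fin.coe_natAdd]
              omega
            rw [hleft r₁, hleft r₂]
            exact hx
          · obtain ⟨x, hx⟩ := ih m₁ (by have := bpos r₁; omega) l₁ l₂ hl
            refine ⟨fun i => if h : (i : ℕ) < m₁ then x ⟨i, h⟩ else e, ?_⟩
            have hleft : ∀ (l : Bracketing m₁) (r : Bracketing k₂),
                (Bracketing.node l r).eval mul (fun i : Fin (m₁ + k₂) =>
                  if h : (i : ℕ) < m₁ then x ⟨i, h⟩ else e) = l.eval mul x := by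
              intro l r
              simp only [Bracketing.eval]
              rw [evalE mul e he r _ (fun i => by
                rw [dif_neg]; simp only [Fin.coe_natAdd]; omega)]
              rw [(he _).2]
              congr 1
              funext i
              rw [dif_pos (by simp only [Fin.coe_castAdd]; exact i.isLt)]
              congr 1
            rw [hleft l₁ r₁, hleft l₂ r₂]
            exact hx
        · -- m₂ < m₁ : use asym the other way
          obtain ⟨x, hx1, hx2⟩ := asym mul e he l₂ r₂ l₁ r₁ h2 hm a b c
          refine ⟨fun i => x (Fin.cast h2.symm i), ?_⟩
          rw [hx2, eval_heq mul h2 (Bracketing.node l₂ r₂) q hq]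
          have : (fun i => x (Fin.cast h2.symm (Fin.cast h2 i))) = x := by
            funext i; congr 1
          rw [this, hx1]
          exact habc
end

section
/- If L is a lattice (with at least two elements) that is not distributive, then for every n ≥ 2 the multiplication of n×n matrices over L is antiassociative: for every m, any two distinct bracketings of size m induce different m-ary term functions on M_n(L). -/
namespace Bracketing

theorem size_pos {m : ℕ} (p : Bracketing m) : 0 < m := by
  induction p <;> omega

variable {G : Type*}

-- Reading the arguments off a sequence lets bracketings of different sizes be compared, and the
-- right subtree of `node l r` then reads a shifted sequence (`evalSeq_node`).
def evalSeq (mul : G → G → G) {m : ℕ} (p : Bracketing m) (f : ℕ → G) : G :=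
  p.eval mul fun i => f i

variable {mul : G → G → G}

theorem evalSeq_node {m k : ℕ} (l : Bracketing m) (r : Bracketing k) (f : ℕ → G) :
    (node l r).evalSeq mul f = mul (l.evalSeq mul f) (r.evalSeq mul fun i => f (m + i)) := rfl

theorem evalSeq_congr {m : ℕ} (p : Bracketing m) {f g : ℕ → G} (h : ∀ i < m, f i = g i) :
    p.evalSeq mul f = p.evalSeq mul g :=
  congrArg (p.eval mul) (funext fun i => h i i.2)

theorem evalSeq_eq_of_forall_eq {e : G} (he : mul e e = e) {m : ℕ} (p : Bracketing m)
    {f : ℕ → G} (hf : ∀ i < m, f i = e) : p.evalSeq mul f = e := by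
  induction p generalizing f with
  | leaf => exact hf 0 one_pos
  | @node m k l r ihl ihr =>
    rw [evalSeq_node, ihl fun i hi => hf i (by omega), ihr fun i hi => hf (m + i) (by omega), he]

theorem evalSeq_eq_apply_of_forall_ne {e : G} (one_mul : ∀ x, mul e x = x)
    (mul_one : ∀ x, mul x e = x) {m : ℕ} (p : Bracketing m) {f : ℕ → G} {j : ℕ} (hj : j < m)
    (hf : ∀ i < m, i ≠ j → f i = e) : p.evalSeq mul f = f j := by
  induction p generalizing f j with
  | leaf =>
    obtain rfl : j = 0 := by omega
    rfl
  | @node m k l r ihl ihr =>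
    rw [evalSeq_node]
    rcases lt_or_ge j m with hjm | hjm
    · rw [ihl hjm fun i hi hij => hf i (by omega) hij,
        evalSeq_eq_of_forall_eq (one_mul e) r fun i hi => hf (m + i) (by omega) (by omega), mul_one]
    · rw [evalSeq_eq_of_forall_eq (one_mul e) l fun i hi => hf i (by omega) (by omega), one_mul,
        ihr (j := j - m) (by omega) fun i hi hij => hf (m + i) (by omega) (by omega),
        Nat.add_sub_cancel' hjm]

theorem evalSeq_eq_mul_of_forall_ne {e : G} (one_mul : ∀ x, mul e x = x)
    (mul_one : ∀ x, mul x e = x) {m : ℕ} (p : Bracketing m) {f : ℕ → G} {j₁ j₂ : ℕ}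
    (hj : j₁ < j₂) (hj₂ : j₂ < m) (hf : ∀ i < m, i ≠ j₁ → i ≠ j₂ → f i = e) :
    p.evalSeq mul f = mul (f j₁) (f j₂) := by
  induction p generalizing f j₁ j₂ with
  | leaf => omega
  | @node m k l r ihl ihr =>
    rw [evalSeq_node]
    rcases lt_or_ge j₂ m with h₂ | h₂
    · rw [ihl hj h₂ fun i hi => hf i (by omega),
        evalSeq_eq_of_forall_eq (one_mul e) r fun i hi => hf (m + i) (by omega) (by omega)
          (by omega), mul_one]
    rcases lt_or_ge j₁ m with h₁ | h₁
    · rw [evalSeq_eq_apply_of_forall_ne one_mul mul_one l h₁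
          fun i hi hij => hf i (by omega) hij (by omega),
        evalSeq_eq_apply_of_forall_ne one_mul mul_one r (j := j₂ - m) (by omega)
          fun i hi hij => hf (m + i) (by omega) (by omega) (by omega),
        Nat.add_sub_cancel' h₂]
    · rw [evalSeq_eq_of_forall_eq (one_mul e) l fun i hi => hf i (by omega) (by omega) (by omega),
        one_mul, ihr (j₁ := j₁ - m) (j₂ := j₂ - m) (by omega) (by omega)
          fun i hi hi₁ hi₂ => hf (m + i) (by omega) (by omega) (by omega),
        Nat.add_sub_cancel' h₁, Nat.add_sub_cancel' h₂]

theorem exists_evalSeq_node_ne {e a b c : G} (one_mul : ∀ x, mul e x = x)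
    (mul_one : ∀ x, mul x e = x) (habc : mul a (mul b c) ≠ mul (mul a b) c)
    {m₁ k₁ m₂ k₂ : ℕ} (p₁ : Bracketing m₁) (p₂ : Bracketing k₁) (q₁ : Bracketing m₂)
    (q₂ : Bracketing k₂) (hlt : m₁ < m₂) (hsize : m₁ + k₁ = m₂ + k₂) :
    ∃ f : ℕ → G, (node p₁ p₂).evalSeq mul f ≠ (node q₁ q₂).evalSeq mul f := by
  have := p₁.size_pos
  have := q₂.size_pos
  let f : ℕ → G := fun i =>
    if i = m₁ - 1 then a else if i = m₁ then b else if i = m₂ then c else e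
  have hf : ∀ i, i ≠ m₁ - 1 → i ≠ m₁ → i ≠ m₂ → f i = e := by
    intro i h₁ h₂ h₃
    simp only [f, if_neg h₁, if_neg h₂, if_neg h₃]
  have ha : f (m₁ - 1) = a := if_pos rfl
  have hb : f m₁ = b := by simp only [f, if_neg (show m₁ ≠ m₁ - 1 by omega), if_pos]
  have hc : f m₂ = c := by
    simp only [f, if_neg (show m₂ ≠ m₁ - 1 by omega), if_neg (show m₂ ≠ m₁ by omega), if_pos]
  refine ⟨f, ?_⟩
  rw [evalSeq_node, evalSeq_node,
    evalSeq_eq_apply_of_forall_ne one_mul mul_one p₁ (j := m₁ - 1) (by omega)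
      fun i hi hij => hf i hij (by omega) (by omega),
    evalSeq_eq_mul_of_forall_ne one_mul mul_one p₂ (j₁ := 0) (j₂ := m₂ - m₁) (by omega) (by omega)
      fun i hi hi₁ hi₂ => hf (m₁ + i) (by omega) (by omega) (by omega),
    evalSeq_eq_mul_of_forall_ne one_mul mul_one q₁ (j₁ := m₁ - 1) (j₂ := m₁) (by omega) hlt
      fun i hi hi₁ hi₂ => hf i hi₁ hi₂ (by omega),
    evalSeq_eq_apply_of_forall_ne one_mul mul_one q₂ (j := 0) (by omega)
      fun i hi hij => hf (m₂ + i) (by omega) (by omega) (by omega),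
    Nat.add_zero, Nat.add_zero, Nat.add_sub_cancel' hlt.le, ha, hb, hc]
  exact habc

theorem forall_evalSeq_eq_of_node {e : G} (one_mul : ∀ x, mul e x = x)
    (mul_one : ∀ x, mul x e = x) {m k : ℕ} {l l' : Bracketing m} {r r' : Bracketing k}
    (h : ∀ f, (node l r).evalSeq mul f = (node l' r').evalSeq mul f) :
    (∀ f, l.evalSeq mul f = l'.evalSeq mul f) ∧ ∀ f, r.evalSeq mul f = r'.evalSeq mul f := by
  constructor
  · intro f
    have key := h fun i => if i < m then f i else e
    have hr : ∀ i < k, (if m + i < m then f (m + i) else e) = e := fun i _ => if_neg (by omega)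
    have hl : ∀ i < m, (if i < m then f i else e) = f i := fun i hi => if_pos hi
    rwa [evalSeq_node, evalSeq_node, evalSeq_eq_of_forall_eq (one_mul e) r hr,
      evalSeq_eq_of_forall_eq (one_mul e) r' hr, mul_one, mul_one, evalSeq_congr l hl,
      evalSeq_congr l' hl] at key
  · intro f
    have key := h fun i => if i < m then e else f (i - m)
    have hl : ∀ i < m, (if i < m then e else f (i - m)) = e := fun i hi => if_pos hi
    have hr : ∀ i < k, (if m + i < m then e else f (m + i - m)) = f i := fun i _ => by
      rw [if_neg (by omega), Nat.add_sub_cancel_left]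
    rwa [evalSeq_node, evalSeq_node, evalSeq_eq_of_forall_eq (one_mul e) l hl,
      evalSeq_eq_of_forall_eq (one_mul e) l' hl, one_mul, one_mul, evalSeq_congr r hr,
      evalSeq_congr r' hr] at key

theorem heq_of_forall_evalSeq_eq {e a b c : G} (one_mul : ∀ x, mul e x = x)
    (mul_one : ∀ x, mul x e = x) (habc : mul a (mul b c) ≠ mul (mul a b) c) :
    ∀ {m m' : ℕ} (p : Bracketing m) (q : Bracketing m'), m = m' →
      (∀ f, p.evalSeq mul f = q.evalSeq mul f) → HEq p q
  | _, _, .leaf, .leaf, _, _ => .rfl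
  | _, _, .leaf, .node l r, hsize, _ | _, _, .node l r, .leaf, hsize, _ =>
    absurd hsize (by have := l.size_pos; have := r.size_pos; omega)
  | _, _, .node (m := m₁) (k := k₁) l r, .node (m := m₂) (k := k₂) l' r', hsize, h => by
    rcases lt_trichotomy m₁ m₂ with hlt | rfl | hgt
    · obtain ⟨f, hf⟩ := exists_evalSeq_node_ne one_mul mul_one habc l r l' r' hlt hsize
      exact absurd (h f) hf
    · obtain rfl : k₁ = k₂ := by omega
      obtain ⟨hl, hr⟩ := forall_evalSeq_eq_of_node one_mul mul_one h
      rw [eq_of_heq (heq_of_forall_evalSeq_eq one_mul mul_one habc l l' rfl hl),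
        eq_of_heq (heq_of_forall_evalSeq_eq one_mul mul_one habc r r' rfl hr)]
    · obtain ⟨f, hf⟩ := exists_evalSeq_node_ne one_mul mul_one habc l' r' l r hgt hsize.symm
      exact absurd (h f).symm hf

theorem exists_eval_ne_of_ne {e a b c : G} (one_mul : ∀ x, mul e x = x)
    (mul_one : ∀ x, mul x e = x) (habc : mul a (mul b c) ≠ mul (mul a b) c) {m : ℕ}
    {p q : Bracketing m} (hpq : p ≠ q) : ∃ X : Fin m → G, p.eval mul X ≠ q.eval mul X := by
  by_contra! h
  exact hpq (eq_of_heq (heq_of_forall_evalSeq_eq one_mul mul_one habc p q rfl fun f => h _))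

theorem apply_eval {H : Type*} {mul' : H → H → H} {f : G → H}
    (hf : ∀ x y, f (mul x y) = mul' (f x) (f y)) {m : ℕ} (p : Bracketing m) (X : Fin m → G) :
    f (p.eval mul X) = p.eval mul' (f ∘ X) := by
  induction p with
  | leaf => rfl
  | node l r ihl ihr => exact (hf _ _).trans (congrArg₂ mul' (ihl _) (ihr _))

theorem eval_comp_ne_of_injective {H : Type*} {mul' : H → H → H} {f : G → H}
    (hinj : Function.Injective f) (hf : ∀ x y, f (mul x y) = mul' (f x) (f y))
    {m : ℕ} {p q : Bracketing m} {X : Fin m → G} (hX : p.eval mul X ≠ q.eval mul X) :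
    p.eval mul' (f ∘ X) ≠ q.eval mul' (f ∘ X) := by
  rw [← apply_eval hf, ← apply_eval hf]
  exact hinj.ne hX

end Bracketing

section LatticeMatrix

variable {L : Type*} [Lattice L] {n : ℕ} [NeZero n]

theorem map_latMatMul {L' : Type*} [Lattice L'] {f : L → L'}
    (map_inf : ∀ x y, f (x ⊓ y) = f x ⊓ f y) (map_sup : ∀ x y, f (x ⊔ y) = f x ⊔ f y)
    (A B : Matrix (Fin n) (Fin n) L) :
    (latMatMul A B).map f = latMatMul (A.map f) (B.map f) := by
  ext i j
  simp only [latMatMul, Matrix.map_apply, Matrix.of_apply,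
    Finset.apply_sup'_eq_sup'_comp _ f map_sup, Function.comp_def, map_inf]

theorem latMatMul_apply_eq_sup_of_eq_bot [OrderBot L] {A B : Matrix (Fin n) (Fin n) L}
    {i j : Fin n} (k₁ k₂ : Fin n) (h : ∀ k, k ≠ k₁ → k ≠ k₂ → A i k ⊓ B k j = ⊥) :
    latMatMul A B i j = A i k₁ ⊓ B k₁ j ⊔ A i k₂ ⊓ B k₂ j := by
  rw [latMatMul, Matrix.of_apply]
  refine le_antisymm (Finset.sup'_le _ _ fun k _ => ?_)
    (sup_le (Finset.le_sup' (fun k => A i k ⊓ B k j) (Finset.mem_univ k₁))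
      (Finset.le_sup' (fun k => A i k ⊓ B k j) (Finset.mem_univ k₂)))
  by_cases h₁ : k = k₁
  · exact h₁ ▸ le_sup_left
  by_cases h₂ : k = k₂
  · exact h₂ ▸ le_sup_right
  · exact (h k h₁ h₂).trans_le bot_le

def latMatOne [BoundedOrder L] : Matrix (Fin n) (Fin n) L :=
  Matrix.of fun i j => if i = j then ⊤ else ⊥

theorem latMatOne_latMatMul [BoundedOrder L] (A : Matrix (Fin n) (Fin n) L) :
    latMatMul latMatOne A = A := by
  ext i j
  rw [latMatMul_apply_eq_sup_of_eq_bot i i fun k hk _ => by simp [latMatOne, Ne.symm hk]]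
  simp [latMatOne]

theorem latMatMul_latMatOne [BoundedOrder L] (A : Matrix (Fin n) (Fin n) L) :
    latMatMul A latMatOne = A := by
  ext i j
  rw [latMatMul_apply_eq_sup_of_eq_bot j j fun k hk _ => by simp [latMatOne, hk]]
  simp [latMatOne]

end LatticeMatrix

theorem exists_latMatMul_ne_of_not_distrib {L : Type*} [Lattice L] [OrderBot L] {a b c : L}
    (h : a ⊓ (b ⊔ c) ≠ a ⊓ b ⊔ a ⊓ c) (n : ℕ) :
    ∃ A B C : Matrix (Fin (n + 2)) (Fin (n + 2)) L,
      latMatMul A (latMatMul B C) ≠ latMatMul (latMatMul A B) C := by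
  let A : Matrix (Fin (n + 2)) (Fin (n + 2)) L := Matrix.of fun i j =>
    if i = 0 ∧ j = 0 then a else ⊥
  let B : Matrix (Fin (n + 2)) (Fin (n + 2)) L := Matrix.of fun i j =>
    if i = 0 ∧ j = 0 then b else if i = 0 ∧ j = 1 then c else ⊥
  let C : Matrix (Fin (n + 2)) (Fin (n + 2)) L := Matrix.of fun i j =>
    if i = 0 ∧ j = 0 then b else if i = 1 ∧ j = 0 then c else ⊥
  have hBC : latMatMul B C 0 0 = b ⊔ c := by
    rw [latMatMul_apply_eq_sup_of_eq_bot 0 1 fun k h₀ h₁ => by simp [B, h₀, h₁]]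
    simp [B, C]
  have hAB₀ : latMatMul A B 0 0 = a ⊓ b := by
    rw [latMatMul_apply_eq_sup_of_eq_bot 0 1 fun k h₀ h₁ => by simp [A, h₀]]
    simp [A, B]
  have hAB₁ : latMatMul A B 0 1 = a ⊓ c := by
    rw [latMatMul_apply_eq_sup_of_eq_bot 0 1 fun k h₀ h₁ => by simp [A, h₀]]
    simp [A, B]
  have hA_BC : latMatMul A (latMatMul B C) 0 0 = a ⊓ (b ⊔ c) := by
    rw [latMatMul_apply_eq_sup_of_eq_bot 0 1 fun k h₀ h₁ => by simp [A, h₀], hBC]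
    simp [A]
  have hAB_C : latMatMul (latMatMul A B) C 0 0 = a ⊓ b ⊔ a ⊓ c := by
    rw [latMatMul_apply_eq_sup_of_eq_bot 0 1 fun k h₀ h₁ => by simp [C, h₀, h₁], hAB₀, hAB₁]
    simp [C]
  refine ⟨A, B, C, fun hassoc => h ?_⟩
  rw [← hA_BC, ← hAB_C, hassoc]

theorem matMul_antiassociative_of_not_distrib_general {L : Type*} [Lattice L]
    (hL : ¬ ∀ a b c : L, a ⊓ (b ⊔ c) = (a ⊓ b) ⊔ (a ⊓ c))
    {n : ℕ} [NeZero n] (hn : 2 ≤ n) :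
    ∀ (m : ℕ) (p q : Bracketing m), p ≠ q →
      ∃ X : Fin m → Matrix (Fin n) (Fin n) L,
        p.eval latMatMul X ≠ q.eval latMatMul X := by
  intro m p q hpq
  push Not at hL
  obtain ⟨a, b, c, hne⟩ := hL
  obtain ⟨n, rfl⟩ := Nat.exists_eq_add_of_le' hn
  have : Fact (a ⊓ b ⊓ c ≤ a ⊔ b ⊔ c) := ⟨by simp⟩
  let a' : Set.Icc (a ⊓ b ⊓ c) (a ⊔ b ⊔ c) :=
    ⟨a, inf_le_left.trans inf_le_left, le_sup_left.trans le_sup_left⟩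
  let b' : Set.Icc (a ⊓ b ⊓ c) (a ⊔ b ⊔ c) :=
    ⟨b, inf_le_left.trans inf_le_right, le_sup_right.trans le_sup_left⟩
  let c' : Set.Icc (a ⊓ b ⊓ c) (a ⊔ b ⊔ c) := ⟨c, inf_le_right, le_sup_right⟩
  obtain ⟨A, B, C, hABC⟩ := exists_latMatMul_ne_of_not_distrib (a := a') (b := b') (c := c')
    (fun h => hne (congrArg Subtype.val h)) n
  obtain ⟨X, hX⟩ :=
    Bracketing.exists_eval_ne_of_ne latMatOne_latMatMul latMatMul_latMatOne hABC hpq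
  exact ⟨_, Bracketing.eval_comp_ne_of_injective (Matrix.map_injective Subtype.val_injective)
    (map_latMatMul (fun _ _ => rfl) (fun _ _ => rfl)) hX⟩

/-- If `L` is a lattice (with at least two elements) that is not distributive, then for every
`n ≥ 2` the multiplication of `n × n` matrices over `L` is antiassociative: any two distinct
bracketings of size `m` induce different `m`-ary term functions on `M_n(L)`. -/
theorem matMul_antiassociative_of_not_distrib {L : Type*} [Lattice L] [Nontrivial L]
    (hL : ¬ ∀ a b c : L, a ⊓ (b ⊔ c) = (a ⊓ b) ⊔ (a ⊓ c))
    {n : ℕ} [NeZero n] (hn : 2 ≤ n) :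
    ∀ (m : ℕ) (p q : Bracketing m), p ≠ q →
      ∃ X : Fin m → Matrix (Fin n) (Fin n) L,
        p.eval latMatMul X ≠ q.eval latMatMul X :=
  matMul_antiassociative_of_not_distrib_general hL hn
end

section
/- Let L be a bounded lattice in which the bottom element 0 is meet-irreducible (a ∧ b = 0 implies a = 0 or b = 0) or the top element 1 is join-irreducible (a ∨ b = 1 implies a = 1 or b = 1). Then for all n×n matrices A, B over L (n ≥ 2), AB = I if and only if there exists a permutation π ∈ S_n such that A = P_π and B = P_{π⁻¹}. -/
/-- Multiplication of `n × n` matrices over a bounded lattice `L`: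
`(A * B) i j = ⋁ k, (A i k ⊓ B k j)`. -/
def bMatMul {L : Type*} [Lattice L] [BoundedOrder L] {n : ℕ}
    (A B : Matrix (Fin n) (Fin n) L) : Matrix (Fin n) (Fin n) L :=
  Matrix.of fun i j => Finset.univ.sup fun k => A i k ⊓ B k j

/-- The identity matrix over a bounded lattice: `1` on the diagonal, `0` elsewhere. -/
def idMat {L : Type*} [Lattice L] [BoundedOrder L] {n : ℕ} : Matrix (Fin n) (Fin n) L :=
  Matrix.of fun i j => if i = j then ⊤ else ⊥

/-- The permutation matrix of `π`: the `(i,j)` entry is `1` if `j = π i` and `0` otherwise. -/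
def permMat {L : Type*} [Lattice L] [BoundedOrder L] {n : ℕ} (π : Equiv.Perm (Fin n)) :
    Matrix (Fin n) (Fin n) L :=
  Matrix.of fun i j => if j = π i then ⊤ else ⊥

/-!
If `AB = I`, every off-diagonal product term `A i k ⊓ B k j` vanishes. Call `a` essential when
`a ⊓ x = ⊥` forces `x = ⊥`: nonzero elements are essential when `0` is meet-irreducible, and `1` is
always essential, so under either hypothesis each diagonal entry `⋁ k, A i k ⊓ B k i = 1` has a
term `A i (f i) ⊓ B (f i) i` with both factors essential. The vanishing off-diagonal terms then
force column `f i` of `A` and row `f i` of `B` to vanish outside index `i`; hence `f` is injective,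
so a permutation, `A` and `B` are supported on `P_f` and `P_{f⁻¹}`, and `AB = I` makes their
supports equal to `1`.
-/

open Finset

theorem Finset.sup_univ_eq_of_ne_eq_bot {ι α : Type*} [Fintype ι] [SemilatticeSup α] [OrderBot α]
    {f : ι → α} (i : ι) (h : ∀ j, j ≠ i → f j = ⊥) : univ.sup f = f i :=
  le_antisymm (Finset.sup_le fun j _ => by
    rcases eq_or_ne j i with rfl | hj
    · exact le_rfl
    · exact (h j hj).trans_le bot_le) (le_sup (mem_univ i))

section Essential

variable {L : Type*} [SemilatticeInf L] [OrderBot L]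

def IsEssential (a : L) : Prop := ∀ x, a ⊓ x = ⊥ → x = ⊥

theorem isEssential_top [OrderTop L] : IsEssential (⊤ : L) := fun x h => by rwa [top_inf_eq] at h

theorem IsEssential.ne_bot [Nontrivial L] {a : L} (ha : IsEssential a) : a ≠ ⊥ := fun h =>
  have ⟨x, hx⟩ := exists_ne (⊥ : L)
  hx (ha x (by rw [h, bot_inf_eq]))

theorem isEssential_of_ne_bot (hbot : ∀ a b : L, a ⊓ b = ⊥ → a = ⊥ ∨ b = ⊥) {a : L}
    (ha : a ≠ ⊥) : IsEssential a := fun x h => (hbot a x h).resolve_left ha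

end Essential

theorem exists_isEssential_inf_of_sup_eq_top {L : Type*} [Lattice L] [BoundedOrder L]
    [Nontrivial L]
    (hirr : (∀ a b : L, a ⊓ b = ⊥ → a = ⊥ ∨ b = ⊥) ∨ (∀ a b : L, a ⊔ b = ⊤ → a = ⊤ ∨ b = ⊤))
    {ι : Type*} [Fintype ι] {f g : ι → L} (h : univ.sup (fun k => f k ⊓ g k) = ⊤) :
    ∃ k, IsEssential (f k) ∧ IsEssential (g k) := by
  rcases hirr with hbot | htop
  · obtain ⟨k, -, hk⟩ : ∃ k ∈ univ, f k ⊓ g k ≠ ⊥ := by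
      by_contra! hall
      exact top_ne_bot (h ▸ Finset.sup_eq_bot_iff _ _ |>.mpr hall)
    exact ⟨k, isEssential_of_ne_bot hbot fun h0 => hk (by rw [h0, bot_inf_eq]),
      isEssential_of_ne_bot hbot fun h0 => hk (by rw [h0, inf_bot_eq])⟩
  · have hirred : SupIrred (⊤ : L) := ⟨not_isMin_top, fun a b hab => htop a b hab⟩
    obtain ⟨k, -, hk⟩ := hirred.finset_sup_eq h
    rw [inf_eq_top_iff] at hk
    exact ⟨k, hk.1 ▸ isEssential_top, hk.2 ▸ isEssential_top⟩

section Matrix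

variable {L : Type*} [Lattice L] [BoundedOrder L] {n : ℕ}

theorem bMatMul_apply_of_supported {A : Matrix (Fin n) (Fin n) L} {π : Equiv.Perm (Fin n)}
    (hA : ∀ i j, j ≠ π i → A i j = ⊥) (B : Matrix (Fin n) (Fin n) L) (i j : Fin n) :
    bMatMul A B i j = A i (π i) ⊓ B (π i) j :=
  Finset.sup_univ_eq_of_ne_eq_bot (π i) fun k hk => by rw [hA i k hk, bot_inf_eq]

theorem bMatMul_permMat_symm (π : Equiv.Perm (Fin n)) :
    bMatMul (permMat π) (permMat π.symm) = (idMat : Matrix (Fin n) (Fin n) L) := by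
  ext i j
  rw [bMatMul_apply_of_supported (A := permMat π) (π := π) fun _ _ hj => if_neg hj]
  simp [permMat, idMat, eq_comm]

theorem inf_eq_bot_of_bMatMul_eq_idMat {A B : Matrix (Fin n) (Fin n) L}
    (hAB : bMatMul A B = idMat) {i j : Fin n} (hij : i ≠ j) (k : Fin n) : A i k ⊓ B k j = ⊥ := by
  have hle : A i k ⊓ B k j ≤ bMatMul A B i j := le_sup (f := fun k => A i k ⊓ B k j) (mem_univ k)
  rw [hAB] at hle
  simpa [idMat, hij] using hle

theorem eq_permMat_of_bMatMul_eq_idMat {A B : Matrix (Fin n) (Fin n) L} {π : Equiv.Perm (Fin n)}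
    (hA : ∀ i j, j ≠ π i → A i j = ⊥) (hB : ∀ k j, j ≠ π.symm k → B k j = ⊥)
    (hAB : bMatMul A B = idMat) : A = permMat π ∧ B = permMat π.symm := by
  have hentry (i j : Fin n) : A i (π i) ⊓ B (π i) j = if i = j then ⊤ else ⊥ := by
    rw [← bMatMul_apply_of_supported hA, hAB]; rfl
  have hdiag (i : Fin n) : A i (π i) = ⊤ ∧ B (π i) i = ⊤ := by
    simpa [inf_eq_top_iff] using hentry i i
  constructor
  · ext i j
    by_cases hj : j = π i
    · simp [permMat, hj, (hdiag i).1]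
    · simp [permMat, hj, hA i j hj]
  · ext k j
    obtain ⟨i, rfl⟩ := π.surjective k
    by_cases hj : j = i
    · simp [permMat, hj, (hdiag i).2]
    · simp [permMat, hj, hB (π i) j (by simpa using hj)]

theorem exists_perm_supported_of_bMatMul_eq_idMat [Nontrivial L]
    (hirr : (∀ a b : L, a ⊓ b = ⊥ → a = ⊥ ∨ b = ⊥) ∨ (∀ a b : L, a ⊔ b = ⊤ → a = ⊤ ∨ b = ⊤))
    {A B : Matrix (Fin n) (Fin n) L} (hAB : bMatMul A B = idMat) :
    ∃ π : Equiv.Perm (Fin n),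
      (∀ i j, j ≠ π i → A i j = ⊥) ∧ (∀ k j, j ≠ π.symm k → B k j = ⊥) := by
  have hdiag (i : Fin n) : univ.sup (fun k => A i k ⊓ B k i) = ⊤ := by
    have := congrFun (congrFun hAB i) i
    simpa [bMatMul, idMat] using this
  choose f hf using fun i => exists_isEssential_inf_of_sup_eq_top hirr (hdiag i)
  have hcol {i i' : Fin n} (hi : i' ≠ i) : A i' (f i) = ⊥ :=
    (hf i).2 _ (by rw [inf_comm]; exact inf_eq_bot_of_bMatMul_eq_idMat hAB hi _)
  have hrow {i j : Fin n} (hj : j ≠ i) : B (f i) j = ⊥ :=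
    (hf i).1 _ (inf_eq_bot_of_bMatMul_eq_idMat hAB (Ne.symm hj) _)
  have hinj : Function.Injective f := fun i i' h => by
    by_contra hne
    exact (hf i).1.ne_bot (h ▸ hcol hne)
  set π := Equiv.ofBijective f hinj.bijective_of_finite
  refine ⟨π, fun i j hj => ?_, fun k j hj => ?_⟩
  · obtain ⟨i', rfl⟩ := π.surjective j
    exact hcol fun h => hj (h ▸ rfl)
  · obtain ⟨i, rfl⟩ := π.surjective k
    exact hrow (by simpa using hj)

end Matrix

theorem matMul_eq_id_iff_permMat_general {L : Type*} [Lattice L] [BoundedOrder L]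
    (hirr : (∀ a b : L, a ⊓ b = ⊥ → a = ⊥ ∨ b = ⊥) ∨
            (∀ a b : L, a ⊔ b = ⊤ → a = ⊤ ∨ b = ⊤))
    {n : ℕ} (A B : Matrix (Fin n) (Fin n) L) :
    bMatMul A B = idMat ↔
      ∃ π : Equiv.Perm (Fin n), A = permMat π ∧ B = permMat π.symm := by
  refine ⟨fun hAB => ?_, fun ⟨π, hA, hB⟩ => hA ▸ hB ▸ bMatMul_permMat_symm π⟩
  cases subsingleton_or_nontrivial L
  · exact ⟨1, Subsingleton.elim _ _, Subsingleton.elim _ _⟩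
  obtain ⟨π, hA, hB⟩ := exists_perm_supported_of_bMatMul_eq_idMat hirr hAB
  exact ⟨π, eq_permMat_of_bMatMul_eq_idMat hA hB hAB⟩

/-- Let `L` be a bounded lattice in which the bottom element is meet-irreducible or the top
element is join-irreducible. Then for `n × n` matrices `A, B` over `L` (`n ≥ 2`), `AB = I`
iff `A = P_π` and `B = P_{π⁻¹}` for some permutation `π ∈ S_n`. -/
theorem matMul_eq_id_iff_permMat {L : Type*} [Lattice L] [BoundedOrder L]
    (hirr : (∀ a b : L, a ⊓ b = ⊥ → a = ⊥ ∨ b = ⊥) ∨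
            (∀ a b : L, a ⊔ b = ⊤ → a = ⊤ ∨ b = ⊤))
    {n : ℕ} (hn : 2 ≤ n) (A B : Matrix (Fin n) (Fin n) L) :
    bMatMul A B = idMat ↔
      ∃ π : Equiv.Perm (Fin n), A = permMat π ∧ B = permMat π.symm :=
  matMul_eq_id_iff_permMat_general hirr A B
end

section
/- Let L be a bounded lattice in which the bottom element 0 is meet-irreducible (a ∧ b = 0 implies a = 0 or b = 0) or the top element 1 is join-irreducible (a ∨ b = 1 implies a = 1 or b = 1). Then matrix multiplication over L is Dedekind-finite: for all n×n matrices A, B over L, AB = I implies BA = I. -/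
private lemma sup_eq_top_exists' {L : Type*} [Lattice L] [BoundedOrder L]
    (hirr : ∀ a b : L, a ⊔ b = ⊤ → a = ⊤ ∨ b = ⊤) (htb : (⊤ : L) ≠ ⊥)
    {α : Type*} (s : Finset α) (f : α → L) (h : s.sup f = ⊤) :
    ∃ a ∈ s, f a = ⊤ := by
  induction s using Finset.cons_induction with
  | empty => simp at h; exact absurd h.symm htb
  | cons a s ha ih =>
    rw [Finset.sup_cons] at h
    rcases hirr _ _ h with h1 | h2
    · exact ⟨a, Finset.mem_cons_self .., h1⟩
    · obtain ⟨b, hb, hfb⟩ := ih h2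
      exact ⟨b, Finset.mem_cons_of_mem hb, hfb⟩

/-- Let `L` be a bounded lattice in which the bottom element is meet-irreducible or the top
element is join-irreducible. Then matrix multiplication over `L` is Dedekind-finite:
`AB = I` implies `BA = I`. -/
theorem matMul_dedekind_finite {L : Type*} [Lattice L] [BoundedOrder L]
    (hirr : (∀ a b : L, a ⊓ b = ⊥ → a = ⊥ ∨ b = ⊥) ∨
            (∀ a b : L, a ⊔ b = ⊤ → a = ⊤ ∨ b = ⊤))
    {n : ℕ} (A B : Matrix (Fin n) (Fin n) L) :
    bMatMul A B = idMat → bMatMul B A = idMat := by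
  intro hAB
  by_cases htb : (⊤ : L) = ⊥
  · have hall : ∀ a : L, a = ⊥ := fun a => le_bot_iff.mp (htb ▸ le_top)
    ext i j
    rw [hall ((bMatMul B A) i j), hall (idMat i j)]
  · have h : ∀ i j, (Finset.univ.sup fun k => A i k ⊓ B k j) = (if i = j then (⊤:L) else ⊥) :=
      fun i j => congrFun (congrFun hAB i) j
    have hdiag : ∀ i, (Finset.univ.sup fun k => A i k ⊓ B k i) = ⊤ := fun i => by
      simpa using h i i
    have hoff : ∀ i j k, i ≠ j → A i k ⊓ B k j = ⊥ := by
      intro i j k hij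
      have hs : (Finset.univ.sup fun k => A i k ⊓ B k j) = ⊥ := (h i j).trans (if_neg hij)
      exact le_bot_iff.mp (le_trans
        (Finset.le_sup (f := fun k => A i k ⊓ B k j) (Finset.mem_univ k)) hs.le)
    obtain ⟨σ, hσinj, hA, hB⟩ : ∃ σ : Fin n → Fin n, Function.Injective σ ∧
        (∀ i, A i (σ i) = ⊤) ∧ (∀ i, B (σ i) i = ⊤) := by
      rcases hirr with hirr | hirr
      · -- bottom meet-irreducible
        have huniq : ∀ i j k, A i k ≠ ⊥ → B k j ≠ ⊥ → i = j := by
          intro i j k ha hb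
          by_contra hij
          rcases hirr _ _ (hoff i j k hij) with h' | h'
          · exact ha h'
          · exact hb h'
        have hex : ∀ i, ∃ k, A i k ≠ ⊥ ∧ B k i ≠ ⊥ := by
          intro i
          by_contra hcon
          push_neg at hcon
          have hbot : (Finset.univ.sup fun k => A i k ⊓ B k i) = ⊥ := by
            apply le_bot_iff.mp
            apply Finset.sup_le
            intro k _
            by_cases hk : A i k = ⊥
            · simp [hk]
            · simp [hcon k hk]
          exact htb ((hdiag i).symm.trans hbot)
        choose σ hσ1 hσ2 using hex
        have hinj : Function.Injective σ := fun i j hsij =>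
          huniq i j (σ i) (hσ1 i) (hsij ▸ hσ2 j)
        have hsurj := Finite.injective_iff_surjective.mp hinj
        have hcollapse : ∀ i k, k ≠ σ i → A i k ⊓ B k i = ⊥ := by
          intro i k hk
          by_contra hne
          have ha : A i k ≠ ⊥ := fun h' => hne (by simp [h'])
          have hb : B k i ≠ ⊥ := fun h' => hne (by simp [h'])
          obtain ⟨m, rfl⟩ := hsurj k
          exact hk (congrArg σ (huniq m i (σ m) (hσ1 m) hb))
        have htop : ∀ i, A i (σ i) ⊓ B (σ i) i = ⊤ := by
          intro i
          refine le_antisymm le_top ?_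
          rw [← hdiag i]
          apply Finset.sup_le
          intro k _
          by_cases hk : k = σ i
          · subst hk; exact le_rfl
          · rw [hcollapse i k hk]; exact bot_le
        exact ⟨σ, hinj,
          fun i => le_antisymm le_top (le_trans (htop i).ge inf_le_left),
          fun i => le_antisymm le_top (le_trans (htop i).ge inf_le_right)⟩
      · -- top join-irreducible
        have hex : ∀ i, ∃ k, A i k = ⊤ ∧ B k i = ⊤ := by
          intro i
          obtain ⟨k, -, hk⟩ := sup_eq_top_exists' hirr htb _ _ (hdiag i)
          refine ⟨k, le_antisymm le_top ?_, le_antisymm le_top ?_⟩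
          · rw [← hk]; exact inf_le_left
          · rw [← hk]; exact inf_le_right
        choose σ hA hB using hex
        have hinj : Function.Injective σ := by
          intro i j hsij
          by_contra hij
          have h1 := hoff i j (σ i) hij
          rw [hA i, hsij, hB j] at h1
          simp only [top_inf_eq] at h1
          exact htb h1
        exact ⟨σ, hinj, hA, hB⟩
    have hsurj : Function.Surjective σ := Finite.injective_iff_surjective.mp hσinj
    ext i j
    show (Finset.univ.sup fun k => B i k ⊓ A k j) = (if i = j then (⊤:L) else ⊥)
    obtain ⟨i0, hi0⟩ := hsurj i
    by_cases hij : i = j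
    · subst hij
      rw [if_pos rfl]
      refine le_antisymm le_top ?_
      have hterm : B i i0 ⊓ A i0 i = ⊤ := by
        rw [← hi0, hB i0, hA i0, top_inf_eq]
      calc (⊤:L) = B i i0 ⊓ A i0 i := hterm.symm
        _ ≤ _ := Finset.le_sup (f := fun k => B i k ⊓ A k i) (Finset.mem_univ i0)
    · rw [if_neg hij]
      apply le_bot_iff.mp
      apply Finset.sup_le
      intro k _
      by_cases hk : σ k = i
      · obtain ⟨j0, hj0⟩ := hsurj j
        have hkj0 : k ≠ j0 := fun hkeq => hij (hk.symm.trans (by rw [hkeq, hj0]))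
        have h1 : A k j ⊓ B j j0 = ⊥ := hoff k j0 j hkj0
        have hBj : B j j0 = ⊤ := by rw [← hj0]; exact hB j0
        rw [hBj, inf_top_eq] at h1
        simp [h1]
      · have hki0 : i0 ≠ k := fun hkeq => hk (hkeq ▸ hi0)
        have h1 : A i0 i ⊓ B i k = ⊥ := hoff i0 k i hki0
        have hAi : A i0 i = ⊤ := by rw [← hi0]; exact hA i0
        rw [hAi, top_inf_eq] at h1
        simp [h1]
end

section
/- A binary relation α on a finite set X satisfies α ∘ α = α (equivalently, the corresponding 0-1 matrix A over the two-element lattice is idempotent, A² = A) if and only if α is a pseudo-order. -/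
/-- Composition of binary relations: `(α ∘ β) x z ↔ ∃ y, α x y ∧ β y z`.
Under the correspondence between `0-1` matrices and relations, this corresponds to
multiplication of matrices over the two-element lattice. -/
def relComp {X : Type*} (α β : X → X → Prop) : X → X → Prop :=
  fun x z => ∃ y, α x y ∧ β y z

/-- A relation `α` is a pseudo-order if it is transitive and for every `(x,y) ∈ α`
there exists `p` with `(p,p) ∈ α`, (`x = p` or `(x,p) ∈ α`) and (`p = y` or `(p,y) ∈ α`). -/
def IsPseudoOrder {X : Type*} (α : X → X → Prop) : Prop :=
  (∀ x y z, α x y → α y z → α x z) ∧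
    ∀ x y, α x y → ∃ p, α p p ∧ (x = p ∨ α x p) ∧ (p = y ∨ α p y)

/-- A binary relation `α` on a finite set satisfies `α ∘ α = α` (equivalently, the
corresponding matrix over the two-element lattice is idempotent) iff `α` is a pseudo-order. -/
theorem relComp_self_eq_self_iff_isPseudoOrder {X : Type*} [Finite X]
    (α : X → X → Prop) : relComp α α = α ↔ IsPseudoOrder α := by
  classical
  constructor
  · intro h
    have htrans : ∀ x y z, α x y → α y z → α x z := by
      intro x y z hxy hyz
      rw [← h]; exact ⟨y, hxy, hyz⟩
    refine ⟨htrans, ?_⟩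
    intro x y hxy
    have hdense : ∀ a b, α a b → ∃ c, α a c ∧ α c b := by
      intro a b hab; rw [← h] at hab; exact hab
    obtain ⟨z0, hxz0, hz0y⟩ := hdense x y hxy
    let g : {w : X // α x w ∧ α w y} → {w : X // α x w ∧ α w y} := fun w =>
      ⟨(hdense x w.1 w.2.1).choose, (hdense x w.1 w.2.1).choose_spec.1,
        htrans _ _ _ (hdense x w.1 w.2.1).choose_spec.2 w.2.2⟩
    let f : ℕ → {w : X // α x w ∧ α w y} := fun n => g^[n] ⟨z0, hxz0, hz0y⟩
    have hstep : ∀ n, α (f (n+1)).1 (f n).1 := by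
      intro n
      have hf : f (n+1) = g (f n) := Function.iterate_succ_apply' g n _
      rw [hf]
      exact (hdense x (f n).1 (f n).2.1).choose_spec.2
    have hchain0 : ∀ k n, α (f (n+k+1)).1 (f n).1 := by
      intro k
      induction k with
      | zero => intro n; exact hstep n
      | succ k ih => intro n; exact htrans _ _ _ (hstep (n+k+1)) (ih n)
    have hchain : ∀ n m, n < m → α (f m).1 (f n).1 := by
      intro n m hlt
      obtain ⟨k, rfl⟩ := Nat.exists_eq_add_of_lt hlt
      exact hchain0 k n
    obtain ⟨n, m, hne, heq⟩ :=
      Finite.exists_ne_map_eq_of_infinite (fun n => (f n).1)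
    rcases hne.lt_or_gt with hlt | hlt
    · refine ⟨(f n).1, ?_, Or.inr (f n).2.1, Or.inr (f n).2.2⟩
      have := hchain n m hlt
      rwa [← heq] at this
    · refine ⟨(f m).1, ?_, Or.inr (f m).2.1, Or.inr (f m).2.2⟩
      have := hchain m n hlt
      rwa [heq] at this
  · rintro ⟨htrans, hpo⟩
    funext x y
    apply propext
    constructor
    · rintro ⟨z, h1, h2⟩; exact htrans _ _ _ h1 h2
    · intro hxy
      obtain ⟨p, hpp, hxp, hpy⟩ := hpo x y hxy
      refine ⟨p, ?_, ?_⟩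
      · rcases hxp with rfl | h'
        exacts [hpp, h']
      · rcases hpy with rfl | h'
        exacts [hpp, h']
end

section
/- Let A, B be n×n matrices over the two-element lattice with corresponding binary relations α, β on X = {1,…,n}. Then: (1) (A,B) ∈ 𝓛 if and only if the set of out-neighborhoods {α⁺(Y) : Y ⊆ X} equals {β⁺(Y) : Y ⊆ X}; (2) (A,B) ∈ 𝓡 if and only if the set of in-neighborhoods {α⁻(Y) : Y ⊆ X} equals {β⁻(Y) : Y ⊆ X}; (3) (A,B) ∈ 𝓗 if and only if both of these hold. -/
/-- Green's relation `𝓛` in the semigroup of binary relations on `X` (equivalently,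
of matrices over the two-element lattice): `(A,B) ∈ 𝓛` iff `∃ C D, CA = B ∧ DB = A`. -/
def greenL {X : Type*} (α β : X → X → Prop) : Prop :=
  (∃ γ : X → X → Prop, relComp γ α = β) ∧ (∃ δ : X → X → Prop, relComp δ β = α)

/-- Green's relation `𝓡`: `(A,B) ∈ 𝓡` iff `∃ C D, AC = B ∧ BD = A`. -/
def greenR {X : Type*} (α β : X → X → Prop) : Prop :=
  (∃ γ : X → X → Prop, relComp α γ = β) ∧ (∃ δ : X → X → Prop, relComp β δ = α)

/-- Green's relation `𝓗 = 𝓛 ∩ 𝓡`. -/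
def greenH {X : Type*} (α β : X → X → Prop) : Prop :=
  greenL α β ∧ greenR α β

/-- The out-neighborhood of a set `Y`: `α⁺(Y) = {z : ∃ y ∈ Y, (y,z) ∈ α}`. -/
def outN {X : Type*} (α : X → X → Prop) (Y : Set X) : Set X :=
  {z | ∃ y ∈ Y, α y z}

/-- The in-neighborhood of a set `Y`: `α⁻(Y) = {z : ∃ y ∈ Y, (z,y) ∈ α}`. -/
def inN {X : Type*} (α : X → X → Prop) (Y : Set X) : Set X :=
  {z | ∃ y ∈ Y, α z y}

lemma outN_relComp {X : Type*} (γ α : X → X → Prop) (Y : Set X) :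
    outN (relComp γ α) Y = outN α (outN γ Y) := by
  ext z
  constructor
  · rintro ⟨x, hx, y, hxy, hyz⟩; exact ⟨y, ⟨x, hx, hxy⟩, hyz⟩
  · rintro ⟨y, ⟨x, hx, hxy⟩, hyz⟩; exact ⟨x, hx, y, hxy, hyz⟩

lemma inN_relComp {X : Type*} (α γ : X → X → Prop) (Y : Set X) :
    inN (relComp α γ) Y = inN α (inN γ Y) := by
  ext x
  constructor
  · rintro ⟨z, hz, y, hxy, hyz⟩; exact ⟨y, ⟨z, hz, hyz⟩, hxy⟩
  · rintro ⟨y, ⟨z, hz, hyz⟩, hxy⟩; exact ⟨z, hz, y, hxy, hyz⟩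

lemma exists_left_of_sub {X : Type*} {α β : X → X → Prop}
    (h : Set.range (outN β) ⊆ Set.range (outN α)) :
    ∃ γ : X → X → Prop, relComp γ α = β := by
  have h' : ∀ x : X, ∃ Y, outN α Y = outN β {x} := fun x => h ⟨{x}, rfl⟩
  choose Y hY using h'
  refine ⟨fun x y => y ∈ Y x, ?_⟩
  funext x z
  have hz := Set.ext_iff.mp (hY x) z
  simp only [outN, Set.mem_setOf_eq, Set.mem_singleton_iff] at hz
  apply propext
  constructor
  · rintro ⟨y, hy, hyz⟩
    obtain ⟨y', hy', hβ⟩ := hz.mp ⟨y, hy, hyz⟩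
    subst hy'; exact hβ
  · intro hβ
    exact hz.mpr ⟨x, rfl, hβ⟩

lemma exists_right_of_sub {X : Type*} {α β : X → X → Prop}
    (h : Set.range (inN β) ⊆ Set.range (inN α)) :
    ∃ γ : X → X → Prop, relComp α γ = β := by
  have h' : ∀ z : X, ∃ Y, inN α Y = inN β {z} := fun z => h ⟨{z}, rfl⟩
  choose Y hY using h'
  refine ⟨fun y z => y ∈ Y z, ?_⟩
  funext x z
  have hx := Set.ext_iff.mp (hY z) x
  simp only [inN, Set.mem_setOf_eq, Set.mem_singleton_iff] at hx
  apply propext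
  constructor
  · rintro ⟨y, hxy, hy⟩
    obtain ⟨z', hz', hβ⟩ := hx.mp ⟨y, hy, hxy⟩
    subst hz'; exact hβ
  · intro hβ
    obtain ⟨y, hy, hxy⟩ := hx.mpr ⟨z, rfl, hβ⟩
    exact ⟨y, hxy, hy⟩

lemma greenL_iff {X : Type*} (α β : X → X → Prop) :
    greenL α β ↔ Set.range (outN α) = Set.range (outN β) := by
  constructor
  · rintro ⟨⟨γ, hγ⟩, ⟨δ, hδ⟩⟩
    apply Set.Subset.antisymm
    · rintro S ⟨Z, rfl⟩
      exact ⟨outN δ Z, by rw [← hδ, outN_relComp]⟩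
    · rintro S ⟨Z, rfl⟩
      exact ⟨outN γ Z, by rw [← hγ, outN_relComp]⟩
  · intro h
    exact ⟨exists_left_of_sub h.ge, exists_left_of_sub h.le⟩

lemma greenR_iff {X : Type*} (α β : X → X → Prop) :
    greenR α β ↔ Set.range (inN α) = Set.range (inN β) := by
  constructor
  · rintro ⟨⟨γ, hγ⟩, ⟨δ, hδ⟩⟩
    apply Set.Subset.antisymm
    · rintro S ⟨Z, rfl⟩
      exact ⟨inN δ Z, by rw [← hδ, inN_relComp]⟩
    · rintro S ⟨Z, rfl⟩
      exact ⟨inN γ Z, by rw [← hγ, inN_relComp]⟩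
  · intro h
    exact ⟨exists_right_of_sub h.ge, exists_right_of_sub h.le⟩

/-- Zaretskii's description of Green's relations `𝓛`, `𝓡` and `𝓗` on the semigroup of
`n × n` matrices over the two-element lattice (equivalently, of binary relations on
`X = {1,…,n}`) in terms of the families of out- and in-neighborhoods. -/
theorem green_iff_neighborhoods {n : ℕ} (α β : Fin n → Fin n → Prop) :
    (greenL α β ↔ Set.range (outN α) = Set.range (outN β)) ∧
    (greenR α β ↔ Set.range (inN α) = Set.range (inN β)) ∧
    (greenH α β ↔
      (Set.range (outN α) = Set.range (outN β) ∧ Set.range (inN α) = Set.range (inN β))) := by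
  refine ⟨greenL_iff α β, greenR_iff α β, ?_⟩
  unfold greenH
  rw [greenL_iff, greenR_iff]
end

section
/- Let A be an idempotent n×n matrix over the two-element lattice, with corresponding pseudo-order α on X = {1,…,n}, and let T ⊆ X be a complete system of representatives of the blocks of the equivalence relation α ∩ α⁻¹ on the set {x : (x,x) ∈ α}. Let D be the diagonal 0-1 matrix with d_{ii} = a_{ii} for i ∈ T and all other entries 0. Then ADA = A; consequently DAD is an idempotent matrix that is 𝓓-related to A, and the relation corresponding to DAD is α ∩ (T × T), which is a partial order on T. -/
/-- Green's relation `𝓓 = 𝓛 ∘ 𝓡`. -/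
def greenD {X : Type*} (α β : X → X → Prop) : Prop :=
  ∃ γ : X → X → Prop, greenL α γ ∧ greenR γ β

/-- The relation corresponding to the diagonal matrix `D` with `d_{ii} = a_{ii}` for
`i ∈ T` and all other entries `0`. -/
def diagRel {X : Type*} (α : X → X → Prop) (T : Set X) : X → X → Prop :=
  fun x y => x = y ∧ x ∈ T ∧ α x x

/-- From idempotence, in a finite type any related pair factors through a loop. -/
lemma loop_exists {n : ℕ} (α : Fin n → Fin n → Prop)
    (hidem : relComp α α = α) :
    ∀ x y, α x y → ∃ p, α x p ∧ α p p ∧ α p y := by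
  have htrans : ∀ a b c, α a b → α b c → α a c := by
    intro a b c h1 h2
    rw [← hidem]; exact ⟨b, h1, h2⟩
  have hsplit : ∀ a b, α a b → ∃ p, α a p ∧ α p b := by
    intro a b h
    rw [← hidem] at h; exact h
  intro x y h
  obtain ⟨p₀, hxp₀, hp₀y⟩ := hsplit x y h
  -- successor function on the set of intermediate points
  have step : ∀ p : {p : Fin n // α x p ∧ α p y},
      ∃ q : {p : Fin n // α x p ∧ α p y}, α p.1 q.1 := by
    rintro ⟨p, hxp, hpy⟩
    obtain ⟨q, hpq, hqy⟩ := hsplit p y hpy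
    exact ⟨⟨q, htrans _ _ _ hxp hpq, hqy⟩, hpq⟩
  let f : {p : Fin n // α x p ∧ α p y} → {p : Fin n // α x p ∧ α p y} :=
    fun p => (step p).choose
  have hf : ∀ p, α p.1 (f p).1 := fun p => (step p).choose_spec
  let g : ℕ → {p : Fin n // α x p ∧ α p y} := fun k => f^[k] ⟨p₀, hxp₀, hp₀y⟩
  have hgsucc : ∀ k, α (g k).1 (g (k+1)).1 := by
    intro k
    have : g (k+1) = f (g k) := Function.iterate_succ_apply' f k _
    rw [this]; exact hf (g k)
  have hchain : ∀ i j, i < j → α (g i).1 (g j).1 := by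
    intro i j hij
    induction j with
    | zero => omega
    | succ j ih =>
      rcases Nat.lt_succ_iff_lt_or_eq.mp hij with h' | h'
      · exact htrans _ _ _ (ih h') (hgsucc j)
      · subst h'; exact hgsucc i
  obtain ⟨i, j, hne, heq⟩ :=
    Finite.exists_ne_map_eq_of_infinite (fun k : ℕ => (g k).1)
  rcases hne.lt_or_gt with hij | hij
  · have hloop : α (g i).1 (g i).1 := by
      have := hchain i j hij
      rwa [← heq] at this
    exact ⟨(g i).1, (g i).2.1, hloop, (g i).2.2⟩
  · have hloop : α (g j).1 (g j).1 := by
      have := hchain j i hij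
      rwa [heq] at this
    exact ⟨(g j).1, (g j).2.1, hloop, (g j).2.2⟩

/-- Let `A` be an idempotent matrix over the two-element lattice with corresponding
pseudo-order `α`, and let `T` be a complete system of representatives of the blocks of the
equivalence relation `α ∩ α⁻¹` on `{x : (x,x) ∈ α}`. Let `D` be the diagonal matrix with
`d_{ii} = a_{ii}` for `i ∈ T` and all other entries `0`. Then `ADA = A`; consequently
`DAD` is idempotent and `𝓓`-related to `A`, the relation corresponding to `DAD` is
`α ∩ (T × T)`, and the latter is a partial order on `T`. -/
theorem ada_eq_a_and_dad_reduced_idempotent {n : ℕ} (α : Fin n → Fin n → Prop)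
    (hidem : relComp α α = α)
    (T : Set (Fin n))
    (hTloop : ∀ t ∈ T, α t t)
    (hTrep : ∀ x, α x x → ∃ t ∈ T, α x t ∧ α t x)
    (hTuniq : ∀ t ∈ T, ∀ t' ∈ T, α t t' → α t' t → t = t') :
    relComp (relComp α (diagRel α T)) α = α ∧
    relComp (relComp (relComp (diagRel α T) α) (diagRel α T))
        (relComp (relComp (diagRel α T) α) (diagRel α T)) =
      relComp (relComp (diagRel α T) α) (diagRel α T) ∧
    greenD α (relComp (relComp (diagRel α T) α) (diagRel α T)) ∧
    (relComp (relComp (diagRel α T) α) (diagRel α T) =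
      fun x y => α x y ∧ x ∈ T ∧ y ∈ T) ∧
    (∀ t ∈ T, α t t ∧ t ∈ T ∧ t ∈ T) ∧
    (∀ x y, (α x y ∧ x ∈ T ∧ y ∈ T) → (α y x ∧ y ∈ T ∧ x ∈ T) → x = y) ∧
    (∀ x y z, (α x y ∧ x ∈ T ∧ y ∈ T) → (α y z ∧ y ∈ T ∧ z ∈ T) →
      (α x z ∧ x ∈ T ∧ z ∈ T)) := by
  have htrans : ∀ a b c, α a b → α b c → α a c := by
    intro a b c h1 h2
    rw [← hidem]; exact ⟨b, h1, h2⟩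
  have hloopT : ∀ x y, α x y → ∃ t ∈ T, α x t ∧ α t t ∧ α t y := by
    intro x y h
    obtain ⟨p, hxp, hpp, hpy⟩ := loop_exists α hidem x y h
    obtain ⟨t, htT, hpt, htp⟩ := hTrep p hpp
    exact ⟨t, htT, htrans _ _ _ hxp hpt, hTloop t htT,
      htrans _ _ _ htp hpy⟩
  -- (1) ADA = A
  have hada : relComp (relComp α (diagRel α T)) α = α := by
    funext x y
    apply propext
    constructor
    · rintro ⟨t, ⟨s, hxs, rfl, hsT, hss⟩, hty⟩
      exact htrans _ _ _ hxs hty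
    · intro h
      obtain ⟨t, htT, hxt, htt, hty⟩ := hloopT x y h
      exact ⟨t, ⟨t, hxt, rfl, htT, htt⟩, hty⟩
  -- (4) DAD = α ∩ (T × T)
  have hdad : relComp (relComp (diagRel α T) α) (diagRel α T) =
      fun x y => α x y ∧ x ∈ T ∧ y ∈ T := by
    funext x y
    apply propext
    constructor
    · rintro ⟨m, ⟨s, ⟨rfl, hxT, hxx⟩, hsm⟩, rfl, hmT, hmm⟩
      exact ⟨hsm, hxT, hmT⟩
    · rintro ⟨hxy, hxT, hyT⟩
      exact ⟨y, ⟨x, ⟨rfl, hxT, hTloop x hxT⟩, hxy⟩, rfl, hyT, hTloop y hyT⟩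
  refine ⟨hada, ?_, ?_, hdad, ?_, ?_, ?_⟩
  · -- (2) DAD idempotent
    rw [hdad]
    funext x y
    apply propext
    constructor
    · rintro ⟨m, ⟨hxm, hxT, hmT⟩, hmy, _, hyT⟩
      exact ⟨htrans _ _ _ hxm hmy, hxT, hyT⟩
    · rintro ⟨hxy, hxT, hyT⟩
      exact ⟨x, ⟨hTloop x hxT, hxT, hxT⟩, hxy, hxT, hyT⟩
  · -- (3) greenD
    refine ⟨relComp (diagRel α T) α, ⟨⟨diagRel α T, rfl⟩, ?_⟩,
      ⟨diagRel α T, rfl⟩, ⟨α, ?_⟩⟩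
    · -- AD ∘ DA = A
      refine ⟨relComp α (diagRel α T), ?_⟩
      funext x y
      apply propext
      constructor
      · rintro ⟨m, ⟨t, hxt, rfl, htT, htt⟩, s, ⟨rfl, _, _⟩, hmy⟩
        exact htrans _ _ _ hxt hmy
      · intro h
        obtain ⟨t, htT, hxt, htt, hty⟩ := hloopT x y h
        exact ⟨t, ⟨t, hxt, rfl, htT, htt⟩, t, ⟨rfl, htT, htt⟩, hty⟩
    · -- DAD ∘ A = DA
      rw [hdad]
      funext x y
      apply propext
      constructor
      · rintro ⟨m, ⟨hxm, hxT, hmT⟩, hmy⟩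
        exact ⟨x, ⟨rfl, hxT, hTloop x hxT⟩, htrans _ _ _ hxm hmy⟩
      · rintro ⟨s, ⟨rfl, hxT, hxx⟩, hxy⟩
        exact ⟨x, ⟨hxx, hxT, hxT⟩, hxy⟩
  · intro t ht
    exact ⟨hTloop t ht, ht, ht⟩
  · rintro x y ⟨hxy, hxT, hyT⟩ ⟨hyx, _, _⟩
    exact hTuniq x hxT y hyT hxy hyx
  · rintro x y z ⟨hxy, hxT, hyT⟩ ⟨hyz, _, hzT⟩
    exact ⟨htrans _ _ _ hxy hyz, hxT, hzT⟩
end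

section
/- Let A, B be idempotent n×n matrices over the two-element lattice with corresponding pseudo-orders α, β on X = {1,…,n}, and let T_α, T_β ⊆ X be complete systems of representatives of the blocks of the equivalence relations α ∩ α⁻¹ and β ∩ β⁻¹ on the elements with loops, so that α ∩ (T_α × T_α) and β ∩ (T_β × T_β) are partial orders. Then (A,B) ∈ 𝓓 if and only if the posets (T_α; α ∩ (T_α × T_α)) and (T_β; β ∩ (T_β × T_β)) are order-isomorphic. -/
section Aux

variable {n : ℕ}

lemma trans_of_idem {ρ : Fin n → Fin n → Prop} (hρ : relComp ρ ρ = ρ)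
    {a b c : Fin n} (h1 : ρ a b) (h2 : ρ b c) : ρ a c := by
  rw [← hρ]; exact ⟨b, h1, h2⟩

lemma dense_of_idem {ρ : Fin n → Fin n → Prop} (hρ : relComp ρ ρ = ρ)
    {a b : Fin n} (h : ρ a b) : ∃ c, ρ a c ∧ ρ c b := by
  rw [← hρ] at h; exact h

lemma exists_loop {ρ : Fin n → Fin n → Prop} (hρ : relComp ρ ρ = ρ)
    {x z : Fin n} (h : ρ x z) : ∃ p, ρ p p ∧ ρ x p ∧ ρ p z := by
  classical
  obtain ⟨y₀, hy₀⟩ := dense_of_idem hρ h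
  have step : ∀ p : {y : Fin n // ρ x y ∧ ρ y z}, ∃ q : {y : Fin n // ρ x y ∧ ρ y z}, ρ p.1 q.1 := by
    rintro ⟨y, hxy, hyz⟩
    obtain ⟨c, h1, h2⟩ := dense_of_idem hρ hyz
    exact ⟨⟨c, trans_of_idem hρ hxy h1, h2⟩, h1⟩
  choose f hf using step
  let u : ℕ → {y : Fin n // ρ x y ∧ ρ y z} := fun k => f^[k] ⟨y₀, hy₀⟩
  have hstep : ∀ k, ρ (u k).1 (u (k+1)).1 := by
    intro k
    have : u (k+1) = f (u k) := Function.iterate_succ_apply' f k _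
    rw [this]; exact hf (u k)
  have hchain : ∀ i k, ρ (u i).1 (u (i+k+1)).1 := by
    intro i k
    induction k with
    | zero => exact hstep i
    | succ k ih => exact trans_of_idem hρ ih (hstep (i+k+1))
  obtain ⟨i, j, hne, heq⟩ := Finite.exists_ne_map_eq_of_infinite u
  have key : ∀ i j : ℕ, i < j → u i = u j → ∃ p, ρ p p ∧ ρ x p ∧ ρ p z := by
    intro i j hij he
    obtain ⟨k, hk⟩ : ∃ k, j = i + k + 1 := ⟨j - i - 1, by omega⟩
    refine ⟨(u i).1, ?_, (u i).2.1, (u i).2.2⟩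
    have hc := hchain i k
    rw [← hk, ← he] at hc
    exact hc
  rcases lt_or_gt_of_ne hne with h' | h'
  · exact key i j h' heq
  · exact key j i h' heq.symm

lemma exists_rep {ρ : Fin n → Fin n → Prop} (hρ : relComp ρ ρ = ρ) {T : Set (Fin n)}
    (hT2 : ∀ x, ρ x x → ∃ t ∈ T, ρ x t ∧ ρ t x) {x z : Fin n} (h : ρ x z) :
    ∃ t ∈ T, ρ x t ∧ ρ t z := by
  obtain ⟨p, hpp, hxp, hpz⟩ := exists_loop hρ h
  obtain ⟨t, ht, hpt, htp⟩ := hT2 p hpp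
  exact ⟨t, ht, trans_of_idem hρ hxp hpt, trans_of_idem hρ htp hpz⟩

def rrow (ρ : Fin n → Fin n → Prop) (x : Fin n) : Set (Fin n) := {y | ρ x y}

def rswap (ρ : Fin n → Fin n → Prop) : Fin n → Fin n → Prop := fun x y => ρ y x

def rspan (ρ : Fin n → Fin n → Prop) : Set (Set (Fin n)) :=
  {R | ∀ y, y ∈ R ↔ ∃ x, rrow ρ x ⊆ R ∧ ρ x y}

def rpsi (ρ : Fin n → Fin n → Prop) (R : Set (Fin n)) : Set (Fin n) :=
  {a | ∃ b, ρ a b ∧ b ∉ R}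

lemma rrow_subset_iff {ρ : Fin n → Fin n → Prop} (hρ : relComp ρ ρ = ρ)
    {t t' : Fin n} (ht' : ρ t' t') : rrow ρ t' ⊆ rrow ρ t ↔ ρ t t' :=
  ⟨fun h => h ht', fun h w hw => trans_of_idem hρ h hw⟩

lemma rrow_mem_rspan {ρ : Fin n → Fin n → Prop} {x : Fin n} : rrow ρ x ∈ rspan ρ := by
  intro y; constructor
  · intro hy; exact ⟨x, subset_rfl, hy⟩
  · rintro ⟨x', hsub, hx'⟩; exact hsub hx'

lemma iUnion_mem_rspan {ρ : Fin n → Fin n → Prop} {ι : Sort*} {S : ι → Set (Fin n)}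
    (h : ∀ i, S i ∈ rspan ρ) : (⋃ i, S i) ∈ rspan ρ := by
  intro y; constructor
  · intro hy
    obtain ⟨i, hi⟩ := Set.mem_iUnion.1 hy
    obtain ⟨x, hsub, hx⟩ := (h i y).1 hi
    exact ⟨x, hsub.trans (Set.subset_iUnion S i), hx⟩
  · rintro ⟨x, hsub, hx⟩; exact hsub hx

lemma rspan_le {C ρ σ : Fin n → Fin n → Prop} (h : relComp C ρ = σ) :
    rspan σ ⊆ rspan ρ := by
  intro R hR y; constructor
  · intro hy
    obtain ⟨x, hsub, hx⟩ := (hR y).1 hy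
    rw [← h] at hx
    obtain ⟨zz, hCz, hzz⟩ := hx
    refine ⟨zz, ?_, hzz⟩
    intro w hw
    apply hsub
    show w ∈ rrow σ x
    rw [← h]
    exact ⟨zz, hCz, hw⟩
  · rintro ⟨x, hsub, hx⟩; exact hsub hx

lemma rpsi_mem (ρ : Fin n → Fin n → Prop) (R : Set (Fin n)) :
    rpsi ρ R ∈ rspan (rswap ρ) := by
  intro a; constructor
  · rintro ⟨b, hab, hb⟩
    refine ⟨b, ?_, hab⟩
    intro c hc
    exact ⟨b, hc, hb⟩
  · rintro ⟨b, hsub, hb⟩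
    exact hsub hb

lemma rpsi_anti {ρ : Fin n → Fin n → Prop} {R R' : Set (Fin n)} (h : R ⊆ R') :
    rpsi ρ R' ⊆ rpsi ρ R := by
  rintro a ⟨b, hab, hb⟩; exact ⟨b, hab, fun hbR => hb (h hbR)⟩

lemma rpsi_rpsi {ρ : Fin n → Fin n → Prop} {R : Set (Fin n)} (hR : R ∈ rspan ρ) :
    rpsi (rswap ρ) (rpsi ρ R) = R := by
  ext y; constructor
  · rintro ⟨x, hxy, hx⟩
    refine (hR y).2 ⟨x, ?_, hxy⟩
    intro w hw
    by_contra hwR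
    exact hx ⟨w, hw, hwR⟩
  · intro hy
    obtain ⟨x, hsub, hxy⟩ := (hR y).1 hy
    exact ⟨x, hxy, fun ⟨b, hxb, hbR⟩ => hbR (hsub hxb)⟩

lemma rswap_rswap (ρ : Fin n → Fin n → Prop) : rswap (rswap ρ) = ρ := rfl

lemma rswap_relComp (a b : Fin n → Fin n → Prop) :
    rswap (relComp a b) = relComp (rswap b) (rswap a) := by
  funext x y
  exact propext ⟨fun ⟨z, h1, h2⟩ => ⟨z, h2, h1⟩, fun ⟨z, h1, h2⟩ => ⟨z, h2, h1⟩⟩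

lemma mem_span_rep {ρ : Fin n → Fin n → Prop} {T : Set (Fin n)} (hρ : relComp ρ ρ = ρ)
    (hT2 : ∀ x, ρ x x → ∃ t ∈ T, ρ x t ∧ ρ t x)
    {R : Set (Fin n)} (hR : R ∈ rspan ρ) (y : Fin n) :
    y ∈ R ↔ ∃ t ∈ T, rrow ρ t ⊆ R ∧ ρ t y := by
  constructor
  · intro hy
    obtain ⟨x, hsub, hx⟩ := (hR y).1 hy
    obtain ⟨t, ht, hxt, hty⟩ := exists_rep hρ hT2 hx
    refine ⟨t, ht, ?_, hty⟩
    intro w hw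
    exact hsub (trans_of_idem hρ hxt hw)
  · rintro ⟨t, ht, hsub, hty⟩; exact hsub hty

lemma generator_maps {α β : Fin n → Fin n → Prop} {Tα Tβ : Set (Fin n)}
    (hα : relComp α α = α) (hβ : relComp β β = β)
    (hTα1 : ∀ t ∈ Tα, α t t)
    (hTα2 : ∀ x, α x x → ∃ t ∈ Tα, α x t ∧ α t x)
    (hTα3 : ∀ t ∈ Tα, ∀ t' ∈ Tα, α t t' → α t' t → t = t')
    (hTβ2 : ∀ x, β x x → ∃ t ∈ Tβ, β x t ∧ β t x)
    (F G : Set (Fin n) → Set (Fin n))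
    (hF : ∀ R ∈ rspan α, F R ∈ rspan β)
    (hG : ∀ S ∈ rspan β, G S ∈ rspan α)
    (hGF : ∀ R ∈ rspan α, G (F R) = R)
    (hFG : ∀ S ∈ rspan β, F (G S) = S)
    (hGmono : ∀ S S', S ⊆ S' → G S ⊆ G S')
    (hFmono : ∀ R R', R ⊆ R' → F R ⊆ F R') :
    ∀ t ∈ Tα, ∃ s ∈ Tβ, F (rrow α t) = rrow β s := by
  intro t ht
  have hrowA : rrow α t ∈ rspan α := rrow_mem_rspan
  have hR : F (rrow α t) ∈ rspan β := hF _ hrowA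
  have hU : F (rrow α t) = ⋃ i : {s : Fin n // s ∈ Tβ ∧ rrow β s ⊆ F (rrow α t)}, rrow β i.1 := by
    ext y
    rw [mem_span_rep hβ hTβ2 hR y]
    simp only [Set.mem_iUnion]
    constructor
    · rintro ⟨s, hs, hsub, hsy⟩; exact ⟨⟨s, hs, hsub⟩, hsy⟩
    · rintro ⟨⟨s, hs, hsub⟩, hsy⟩; exact ⟨s, hs, hsub, hsy⟩
  have hGU : G (F (rrow α t)) =
      ⋃ i : {s : Fin n // s ∈ Tβ ∧ rrow β s ⊆ F (rrow α t)}, G (rrow β i.1) := by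
    apply Set.Subset.antisymm
    · have hUspan : (⋃ i : {s : Fin n // s ∈ Tβ ∧ rrow β s ⊆ F (rrow α t)}, G (rrow β i.1))
          ∈ rspan α := iUnion_mem_rspan (fun i => hG _ rrow_mem_rspan)
      have h1 : F (rrow α t) ⊆
          F (⋃ i : {s : Fin n // s ∈ Tβ ∧ rrow β s ⊆ F (rrow α t)}, G (rrow β i.1)) := by
        conv_lhs => rw [hU]
        apply Set.iUnion_subset
        intro i
        have he : rrow β i.1 = F (G (rrow β i.1)) := (hFG _ rrow_mem_rspan).symm
        rw [he]
        exact hFmono _ _ (Set.subset_iUnion (fun j : {s : Fin n // s ∈ Tβ ∧ rrow β s ⊆ F (rrow α t)} => G (rrow β j.1)) i)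
      have h2 := hGmono _ _ h1
      rwa [hGF _ hUspan] at h2
    · exact Set.iUnion_subset fun i => hGmono _ _ i.2.2
  have hGR : G (F (rrow α t)) = rrow α t := hGF _ hrowA
  have htmem : t ∈ G (F (rrow α t)) := by rw [hGR]; exact hTα1 t ht
  rw [hGU] at htmem
  obtain ⟨⟨s, hs, hsub⟩, hi⟩ := Set.mem_iUnion.1 htmem
  have hGs_span : G (rrow β s) ∈ rspan α := hG _ rrow_mem_rspan
  have hGs_sub : G (rrow β s) ⊆ rrow α t := by
    have h3 := hGmono _ _ hsub
    rwa [hGR] at h3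
  obtain ⟨t', ht', hsub', ht't⟩ := (mem_span_rep hα hTα2 hGs_span t).1 hi
  have h1 : α t t' := hGs_sub (hsub' (hTα1 t' ht'))
  have hte : t = t' := hTα3 t ht t' ht' h1 ht't
  subst hte
  have heq : G (rrow β s) = rrow α t := Set.Subset.antisymm hGs_sub hsub'
  refine ⟨s, hs, ?_⟩
  calc F (rrow α t) = F (G (rrow β s)) := by rw [heq]
    _ = rrow β s := hFG _ rrow_mem_rspan

end Aux

/-- Two idempotent matrices over the two-element lattice, with pseudo-orders `α, β` and
complete systems of representatives `Tα, Tβ` of the blocks of `α ∩ α⁻¹` resp. `β ∩ β⁻¹`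
(so that the restrictions `α ∩ (Tα × Tα)` and `β ∩ (Tβ × Tβ)` are partial orders), are
`𝓓`-related iff the posets `(Tα; α ∩ (Tα × Tα))` and `(Tβ; β ∩ (Tβ × Tβ))` are
order-isomorphic. -/
theorem greenD_iff_posets_isomorphic {n : ℕ} (α β : Fin n → Fin n → Prop)
    (hα : relComp α α = α) (hβ : relComp β β = β)
    (Tα Tβ : Set (Fin n))
    (hTα1 : ∀ t ∈ Tα, α t t)
    (hTα2 : ∀ x, α x x → ∃ t ∈ Tα, α x t ∧ α t x)
    (hTα3 : ∀ t ∈ Tα, ∀ t' ∈ Tα, α t t' → α t' t → t = t')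
    (hTβ1 : ∀ t ∈ Tβ, β t t)
    (hTβ2 : ∀ x, β x x → ∃ t ∈ Tβ, β x t ∧ β t x)
    (hTβ3 : ∀ t ∈ Tβ, ∀ t' ∈ Tβ, β t t' → β t' t → t = t') :
    greenD α β ↔
      ∃ g : Fin n → Fin n, Set.BijOn g Tα Tβ ∧
        ∀ x ∈ Tα, ∀ y ∈ Tα, (α x y ↔ β (g x) (g y)) := by
  constructor
  · rintro ⟨γ, ⟨⟨C, hC⟩, ⟨D, hD⟩⟩, ⟨C', hC'⟩, ⟨D', hD'⟩⟩
    classical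
    have spanA : rspan α = rspan γ := Set.Subset.antisymm (rspan_le hD) (rspan_le hC)
    have spanB : rspan (rswap γ) = rspan (rswap β) := by
      apply Set.Subset.antisymm
      · exact rspan_le (show relComp (rswap D') (rswap β) = rswap γ by
          rw [← rswap_relComp, hD'])
      · exact rspan_le (show relComp (rswap C') (rswap γ) = rswap β by
          rw [← rswap_relComp, hC'])
    set F : Set (Fin n) → Set (Fin n) := fun R => rpsi (rswap β) (rpsi γ R) with hFdef
    set G : Set (Fin n) → Set (Fin n) := fun S => rpsi (rswap γ) (rpsi β S) with hGdef
    have hF : ∀ R ∈ rspan α, F R ∈ rspan β := by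
      intro R _
      have h1 := rpsi_mem (rswap β) (rpsi γ R)
      rwa [rswap_rswap] at h1
    have hG : ∀ S ∈ rspan β, G S ∈ rspan α := by
      intro S _
      have h1 := rpsi_mem (rswap γ) (rpsi β S)
      rw [rswap_rswap] at h1
      rwa [← spanA] at h1
    have hGF : ∀ R ∈ rspan α, G (F R) = R := by
      intro R hR
      have hRγ : R ∈ rspan γ := spanA ▸ hR
      have h1 : rpsi γ R ∈ rspan (rswap β) := spanB ▸ rpsi_mem γ R
      have h2 : rpsi β (rpsi (rswap β) (rpsi γ R)) = rpsi γ R := rpsi_rpsi h1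
      show rpsi (rswap γ) (rpsi β (rpsi (rswap β) (rpsi γ R))) = R
      rw [h2]
      exact rpsi_rpsi hRγ
    have hFG : ∀ S ∈ rspan β, F (G S) = S := by
      intro S hS
      have h1 : rpsi β S ∈ rspan (rswap γ) := spanB ▸ rpsi_mem β S
      have h2 : rpsi γ (rpsi (rswap γ) (rpsi β S)) = rpsi β S := rpsi_rpsi h1
      show rpsi (rswap β) (rpsi γ (rpsi (rswap γ) (rpsi β S))) = S
      rw [h2]
      exact rpsi_rpsi hS
    have hFmono : ∀ R R', R ⊆ R' → F R ⊆ F R' := fun R R' h => rpsi_anti (rpsi_anti h)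
    have hGmono : ∀ S S', S ⊆ S' → G S ⊆ G S' := fun S S' h => rpsi_anti (rpsi_anti h)
    have hg := generator_maps hα hβ hTα1 hTα2 hTα3 hTβ2 F G hF hG hGF hFG hGmono hFmono
    have hh := generator_maps hβ hα hTβ1 hTβ2 hTβ3 hTα2 G F hG hF hFG hGF hFmono hGmono
    set g : Fin n → Fin n :=
      fun t => if h : ∃ s, s ∈ Tβ ∧ F (rrow α t) = rrow β s then h.choose else t with hgdef
    have hgspec : ∀ t ∈ Tα, g t ∈ Tβ ∧ F (rrow α t) = rrow β (g t) := by
      intro t ht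
      obtain ⟨s, hs, he⟩ := hg t ht
      have hex : ∃ s, s ∈ Tβ ∧ F (rrow α t) = rrow β s := ⟨s, hs, he⟩
      simp only [hgdef, dif_pos hex]
      exact ⟨hex.choose_spec.1, hex.choose_spec.2⟩
    have keyrow : ∀ t ∈ Tα, ∀ t' ∈ Tα,
        (rrow α t' ⊆ rrow α t ↔ rrow β (g t') ⊆ rrow β (g t)) := by
      intro t ht t' ht'
      obtain ⟨hgt, het⟩ := hgspec t ht
      obtain ⟨hgt', het'⟩ := hgspec t' ht'
      constructor
      · intro h
        rw [← het, ← het']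
        exact hFmono _ _ h
      · intro h
        have h2 := hGmono _ _ h
        rw [← het, ← het', hGF _ rrow_mem_rspan, hGF _ rrow_mem_rspan] at h2
        exact h2
    have hord : ∀ t ∈ Tα, ∀ t' ∈ Tα, (α t t' ↔ β (g t) (g t')) := by
      intro t ht t' ht'
      rw [← rrow_subset_iff hα (hTα1 t' ht'),
        ← rrow_subset_iff hβ (hTβ1 _ (hgspec t' ht').1)]
      exact keyrow t ht t' ht'
    have rowinjβ : ∀ s ∈ Tβ, ∀ s' ∈ Tβ, rrow β s = rrow β s' → s = s' := by
      intro s hs s' hs' he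
      have h1 : β s s' := by
        rw [← rrow_subset_iff hβ (hTβ1 s' hs'), he]
      have h2 : β s' s := by
        rw [← rrow_subset_iff hβ (hTβ1 s hs), ← he]
      exact hTβ3 s hs s' hs' h1 h2
    refine ⟨g, ⟨?_, ?_, ?_⟩, hord⟩
    · intro t ht
      exact (hgspec t ht).1
    · intro t ht t' ht' he
      apply hTα3 t ht t' ht'
      · rw [hord t ht t' ht', he]
        exact hTβ1 _ (hgspec t' ht').1
      · rw [hord t' ht' t ht, he]
        exact hTβ1 _ (hgspec t' ht').1
    · intro s hs
      obtain ⟨t, ht, he⟩ := hh s hs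
      refine ⟨t, ht, ?_⟩
      apply rowinjβ _ (hgspec t ht).1 _ hs
      rw [← (hgspec t ht).2, ← he]
      exact hFG _ rrow_mem_rspan
  · rintro ⟨g, ⟨hmap, hinj, hsurj⟩, hord⟩
    refine ⟨(fun x y => ∃ t, t ∈ Tα ∧ β x (g t) ∧ α t y),
      ⟨⟨fun x z => z ∈ Tα ∧ β x (g z), ?_⟩,
       ⟨fun x z => ∃ t, t ∈ Tα ∧ α x t ∧ z = g t, ?_⟩⟩,
      ⟨fun z y => z ∈ Tα ∧ β (g z) y, ?_⟩,
      ⟨fun z y => ∃ t, t ∈ Tα ∧ z = g t ∧ α t y, ?_⟩⟩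
    · funext x y
      apply propext
      constructor
      · rintro ⟨z, ⟨hz, hb⟩, ha⟩
        exact ⟨z, hz, hb, ha⟩
      · rintro ⟨t, ht, h1, h2⟩
        exact ⟨t, ⟨ht, h1⟩, h2⟩
    · funext x y
      apply propext
      constructor
      · rintro ⟨z, ⟨t, ht, hxt, rfl⟩, t', ht', h1, h2⟩
        have h3 : α t t' := (hord t ht t' ht').2 h1
        exact trans_of_idem hα (trans_of_idem hα hxt h3) h2
      · intro hxy
        obtain ⟨t, ht, h1, h2⟩ := exists_rep hα hTα2 hxy
        exact ⟨g t, ⟨t, ht, h1, rfl⟩, t, ht, hTβ1 _ (hmap ht), h2⟩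
    · funext x y
      apply propext
      constructor
      · rintro ⟨z, ⟨t, ht, h1, h2⟩, hz, h3⟩
        have hb : β (g t) (g z) := (hord t ht z hz).1 h2
        exact trans_of_idem hβ (trans_of_idem hβ h1 hb) h3
      · intro hxy
        obtain ⟨s, hs, h1, h2⟩ := exists_rep hβ hTβ2 hxy
        obtain ⟨t, ht, rfl⟩ := hsurj hs
        exact ⟨t, ⟨t, ht, h1, hTα1 t ht⟩, ht, h2⟩
    · funext x y
      apply propext
      constructor
      · rintro ⟨z, h1, t, ht, rfl, h2⟩
        exact ⟨t, ht, h1, h2⟩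
      · rintro ⟨t, ht, h1, h2⟩
        exact ⟨g t, h1, t, ht, rfl, h2⟩
end

section
/- Let A be an idempotent n×n matrix over the two-element lattice whose corresponding relation α is a partial order on the set T = {x : (x,x) ∈ α} ⊆ X and has every element of X ∖ T isolated (a reduced idempotent). Then a matrix B belongs to the 𝓗-class of A if and only if B = P_f A for some permutation f of X = {1,…,n} such that f(T) = T and the restriction of f to T is an automorphism of the poset (T; α). -/
lemma relComp_assoc {X : Type*} (a b c : X → X → Prop) :
    relComp (relComp a b) c = relComp a (relComp b c) := by
  funext x z
  apply propext
  constructor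
  · rintro ⟨y, ⟨u, hau, hub⟩, hc⟩; exact ⟨u, hau, y, hub, hc⟩
  · rintro ⟨u, hau, y, hub, hc⟩; exact ⟨y, ⟨u, hau, hub⟩, hc⟩

/-- Let `A` be a reduced idempotent over the two-element lattice: its relation `α` is a
partial order on `T = {x : (x,x) ∈ α}` and every element outside `T` is isolated.
Then `B` belongs to the `𝓗`-class of `A` iff `B = P_f A` (i.e. `β x y ↔ α (f x) y`) for
some permutation `f` of `X` with `f(T) = T` whose restriction to `T` is an automorphism
of the poset `(T; α)`. -/
theorem hClass_of_reduced_idempotent {n : ℕ} (α : Fin n → Fin n → Prop)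
    (hidem : relComp α α = α)
    (hanti : ∀ x y, α x x → α y y → α x y → α y x → x = y)
    (hisol : ∀ x, ¬ α x x → ∀ y, ¬ α x y ∧ ¬ α y x)
    (β : Fin n → Fin n → Prop) :
    greenH α β ↔
      ∃ f : Equiv.Perm (Fin n),
        (⇑f) '' {x | α x x} = {x | α x x} ∧
        (∀ x y, α x x → α y y → (α x y ↔ α (f x) (f y))) ∧
        β = fun x y => α (f x) y := by
  classical
  have htrans : ∀ x y z : Fin n, α x y → α y z → α x z := by
    intro x y z hxy hyz
    rw [← hidem]; exact ⟨y, hxy, hyz⟩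
  have hmem : ∀ x y : Fin n, α x y → α x x ∧ α y y := by
    intro x y hxy
    constructor
    · by_contra h; exact (hisol x h y).1 hxy
    · by_contra h; exact (hisol y h x).2 hxy
  constructor
  · rintro ⟨⟨⟨γ, hγ⟩, ⟨δ, hδ⟩⟩, ⟨⟨γ', hγ'⟩, ⟨δ', hδ'⟩⟩⟩
    have hβα : relComp β α = β := by rw [← hγ, relComp_assoc, hidem]
    have hαβ : relComp α β = β := by rw [← hγ', ← relComp_assoc, hidem]
    set c := relComp α (relComp δ α) with hc
    have hcβ : relComp c β = α := by
      rw [hc, relComp_assoc, relComp_assoc, hαβ, hδ, hidem]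
    have key : relComp δ α = relComp α δ' := by
      calc relComp δ α = relComp δ (relComp β δ') := by rw [hδ']
        _ = relComp (relComp δ β) δ' := (relComp_assoc _ _ _).symm
        _ = relComp α δ' := by rw [hδ]
    have hc2 : c = relComp α δ' := by rw [hc, key, ← relComp_assoc, hidem]
    have hβc : relComp β c = α := by rw [hc2, ← relComp_assoc, hβα, hδ']
    -- pointwise versions
    have pβc : ∀ x z : Fin n, α x z ↔ ∃ y, β x y ∧ c y z := fun x z =>
      (iff_of_eq (congrFun (congrFun hβc x) z)).symm
    have pcβ : ∀ x z : Fin n, α x z ↔ ∃ y, c x y ∧ β y z := fun x z =>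
      (iff_of_eq (congrFun (congrFun hcβ x) z)).symm
    have pαβ : ∀ x z : Fin n, β x z ↔ ∃ y, α x y ∧ β y z := fun x z =>
      (iff_of_eq (congrFun (congrFun hαβ x) z)).symm
    have pβα : ∀ x z : Fin n, β x z ↔ ∃ y, β x y ∧ α y z := fun x z =>
      (iff_of_eq (congrFun (congrFun hβα x) z)).symm
    -- definition of g by choice
    have hex : ∀ x : Fin n, ∃ t, (α x x → β x t ∧ c t x) ∧ (¬ α x x → t = x) := by
      intro x
      by_cases hx : α x x
      · obtain ⟨t, ht⟩ := (pβc x x).1 hx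
        exact ⟨t, fun _ => ht, fun h => absurd hx h⟩
      · exact ⟨x, fun h => absurd h hx, fun _ => rfl⟩
    choose g hg1 hg2 using hex
    have hβempty : ∀ x, ¬ α x x → ∀ z, ¬ β x z := by
      intro x hx z hβ
      obtain ⟨y, hαxy, _⟩ := (pαβ x z).1 hβ
      exact (hisol x hx y).1 hαxy
    have hrow : ∀ x, α x x → ∀ z, (β x z ↔ α (g x) z) := by
      intro x hx z
      obtain ⟨hβxg, hcgx⟩ := hg1 x hx
      constructor
      · intro hβxz; exact (pcβ (g x) z).2 ⟨x, hcgx, hβxz⟩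
      · intro hαgz; exact (pβα x z).2 ⟨g x, hβxg, hαgz⟩
    have hgT : ∀ x, α x x → α (g x) (g x) := by
      intro x hx
      exact (hrow x hx (g x)).1 (hg1 x hx).1
    have hrowsub : ∀ x y, α x x → α y y → (α x y ↔ ∀ z, α y z → α x z) := by
      intro x y _ hy
      constructor
      · intro hxy z hyz; exact htrans x y z hxy hyz
      · intro h; exact h y hy
    have hβsub : ∀ x y, α x x → α y y →
        ((∀ z, α y z → α x z) ↔ ∀ z, β y z → β x z) := by
      intro x y _ _
      constructor
      · intro h z hβyz
        obtain ⟨u, hαyu, hβuz⟩ := (pαβ y z).1 hβyz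
        exact (pαβ x z).2 ⟨u, h u hαyu, hβuz⟩
      · intro h z hαyz
        obtain ⟨u, hβyu, hcuz⟩ := (pβc y z).1 hαyz
        exact (pβc x z).2 ⟨u, h u hβyu, hcuz⟩
    have hordg : ∀ x y, α x x → α y y → (α x y ↔ α (g x) (g y)) := by
      intro x y hx hy
      rw [hrowsub x y hx hy, hβsub x y hx hy,
        hrowsub (g x) (g y) (hgT x hx) (hgT y hy)]
      constructor
      · intro h z hz
        exact (hrow x hx z).1 (h z ((hrow y hy z).2 hz))
      · intro h z hz
        exact (hrow x hx z).2 (h z ((hrow y hy z).1 hz))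
    have hginj : Function.Injective g := by
      intro x y hxy
      by_cases hx : α x x <;> by_cases hy : α y y
      · have h1 : α x y := (hordg x y hx hy).2 (by rw [hxy]; exact hgT y hy)
        have h2 : α y x := (hordg y x hy hx).2 (by rw [hxy]; exact hgT y hy)
        exact hanti x y hx hy h1 h2
      · rw [hg2 y hy] at hxy
        exact absurd (hxy ▸ hgT x hx) hy
      · rw [hg2 x hx] at hxy
        exact absurd (hxy.symm ▸ hgT y hy) hx
      · rw [hg2 x hx, hg2 y hy] at hxy; exact hxy
    have hgbij : Function.Bijective g := Finite.injective_iff_bijective.1 hginj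
    refine ⟨Equiv.ofBijective g hgbij, ?_, ?_, ?_⟩
    · ext t
      simp only [Set.mem_image, Set.mem_setOf_eq, Equiv.ofBijective_apply]
      constructor
      · rintro ⟨x, hx, rfl⟩; exact hgT x hx
      · intro ht
        obtain ⟨x, hx⟩ := hgbij.2 t
        refine ⟨x, ?_, hx⟩
        by_contra hxT
        rw [hg2 x hxT] at hx
        exact hxT (hx ▸ ht)
    · intro x y hx hy
      exact hordg x y hx hy
    · funext x z
      show β x z = α (g x) z
      by_cases hx : α x x
      · exact propext (hrow x hx z)
      · apply propext
        rw [hg2 x hx]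
        exact iff_of_false (hβempty x hx z) (hisol x hx z).1
  · rintro ⟨f, hT, hord, rfl⟩
    have hfT : ∀ x : Fin n, α x x → α (f x) (f x) := by
      intro x hx
      have : f x ∈ (⇑f) '' {x | α x x} := ⟨x, hx, rfl⟩
      rwa [hT] at this
    have hfT' : ∀ x : Fin n, α (f x) (f x) → α x x := by
      intro x hx
      have : f x ∈ {x : Fin n | α x x} := hx
      rw [← hT] at this
      obtain ⟨x', hx', he⟩ := this
      rwa [f.injective he] at hx'
    constructor
    · constructor
      · refine ⟨fun x y => y = f x, ?_⟩
        funext x z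
        apply propext
        constructor
        · rintro ⟨y, rfl, h⟩; exact h
        · intro h; exact ⟨f x, rfl, h⟩
      · refine ⟨fun x y => y = f.symm x, ?_⟩
        funext x z
        apply propext
        constructor
        · rintro ⟨y, rfl, h⟩
          simpa using h
        · intro h
          exact ⟨f.symm x, rfl, by simpa using h⟩
    · constructor
      · refine ⟨fun y z => α (f y) z, ?_⟩
        funext x z
        apply propext
        constructor
        · rintro ⟨y, hxy, hfyz⟩
          obtain ⟨hx, hy⟩ := hmem x y hxy
          have h1 : α (f x) (f y) := (hord x y hx hy).1 hxy
          exact htrans _ _ _ h1 hfyz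
        · intro h
          have hx : α x x := hfT' x (hmem _ _ h).1
          exact ⟨x, hx, h⟩
      · refine ⟨fun y z => α (f.symm y) z, ?_⟩
        funext x z
        apply propext
        constructor
        · rintro ⟨y, hfxy, hsyz⟩
          obtain ⟨hfx, hy⟩ := hmem (f x) y hfxy
          have hx : α x x := hfT' x hfx
          have hsy : α (f.symm y) (f.symm y) := by
            have := hmem _ _ hsyz
            exact this.1
          have h1 : α x (f.symm y) := by
            rw [hord x (f.symm y) hx hsy]
            simpa using hfxy
          exact htrans _ _ _ h1 hsyz
        · intro h
          have hx : α x x := (hmem _ _ h).1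
          exact ⟨f x, hfT x hx, by simpa using h⟩
end

section
/- Let A be an idempotent n×n matrix over the two-element lattice whose corresponding relation α is a partial order on T = {x : (x,x) ∈ α} ⊆ X with every element of X ∖ T isolated. For each automorphism g of the poset (T; α), let ĝ be its extension to a permutation of X fixing X ∖ T pointwise. Then the map g ↦ P_ĝ A is a bijection from the automorphism group of (T; α) onto the 𝓗-class of A, and it is multiplicative: (P_ĝ A)(P_ĥ A) = P_{\widehat{gh}} A for all automorphisms g, h. Hence the maximal subgroup of B_n around A is isomorphic to the automorphism group of (T; α). -/
/-- `f` is the extension `ĝ` (fixing `X ∖ T` pointwise) of an automorphism `g` of the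
poset `(T; α)`, where `T = {x : (x,x) ∈ α}`. -/
def IsExtAut {X : Type*} (α : X → X → Prop) (f : Equiv.Perm X) : Prop :=
  (∀ x, ¬ α x x → f x = x) ∧ (∀ x, α x x → α (f x) (f x)) ∧
    ∀ x y, α x x → α y y → (α x y ↔ α (f x) (f y))

/-- The relation of the matrix `P_f A`: `(P_f A)_{x y} = a_{f(x) y}`. -/
def permRel {X : Type*} (f : Equiv.Perm X) (α : X → X → Prop) : X → X → Prop :=
  fun x y => α (f x) y

/-- Let `A` be a reduced idempotent over the two-element lattice: its relation `α` is a
partial order on `T = {x : (x,x) ∈ α}` with every element outside `T` isolated. The map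
`g ↦ P_ĝ A` (where `ĝ` extends the automorphism `g` of `(T; α)` by the identity on
`X ∖ T`) maps automorphisms into the `𝓗`-class of `A`, is injective, is surjective onto
the `𝓗`-class, and is multiplicative: `(P_ĝ A)(P_ĥ A) = P_{ĝĥ} A`. Hence the maximal
subgroup of `B_n` around `A` is isomorphic to the automorphism group of `(T; α)`. -/
theorem maximal_subgroup_iso_aut {n : ℕ} (α : Fin n → Fin n → Prop)
    (hidem : relComp α α = α)
    (hanti : ∀ x y, α x x → α y y → α x y → α y x → x = y)
    (hisol : ∀ x, ¬ α x x → ∀ y, ¬ α x y ∧ ¬ α y x) :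
    (∀ f : Equiv.Perm (Fin n), IsExtAut α f → greenH α (permRel f α)) ∧
    (∀ f g : Equiv.Perm (Fin n), IsExtAut α f → IsExtAut α g →
      permRel f α = permRel g α → f = g) ∧
    (∀ β : Fin n → Fin n → Prop, greenH α β →
      ∃ f : Equiv.Perm (Fin n), IsExtAut α f ∧ β = permRel f α) ∧
    (∀ f g : Equiv.Perm (Fin n), IsExtAut α f → IsExtAut α g →
      relComp (permRel f α) (permRel g α) = permRel (f.trans g) α) := by
  
  classical
  have hmem : ∀ x y, α x y → α x x ∧ α y y := by
    intro x y h
    constructor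
    · by_contra hx; exact (hisol x hx y).1 h
    · by_contra hy; exact (hisol y hy x).2 h
  have htrans : ∀ x y z, α x y → α y z → α x z := by
    intro x y z h1 h2
    have h := congrFun (congrFun hidem x) z
    rw [← h]; exact ⟨y, h1, h2⟩
  have relComp_assoc : ∀ a b c : Fin n → Fin n → Prop,
      relComp (relComp a b) c = relComp a (relComp b c) := by
    intro a b c
    funext x z
    apply propext
    constructor
    · rintro ⟨y, ⟨w, h1, h2⟩, h3⟩; exact ⟨w, h1, y, h2, h3⟩
    · rintro ⟨w, h1, y, h2, h3⟩; exact ⟨y, ⟨w, h1, h2⟩, h3⟩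
  -- inverse of an extended automorphism
  have hinv : ∀ f : Equiv.Perm (Fin n), IsExtAut α f → IsExtAut α f.symm := by
    intro f hf
    have hmem' : ∀ x, α x x → α (f.symm x) (f.symm x) := by
      intro x hx
      by_contra h
      have h2 := hf.1 _ h
      rw [Equiv.apply_symm_apply] at h2
      rw [h2] at hx
      exact h hx
    refine ⟨?_, hmem', ?_⟩
    · intro x hx
      have h2 : ¬ α (f.symm x) (f.symm x) := by
        intro h
        have := hf.2.1 _ h
        rw [Equiv.apply_symm_apply] at this
        exact hx this
      have h3 := hf.1 _ h2
      rw [Equiv.apply_symm_apply] at h3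
      exact h3.symm
    · intro x y hx hy
      have := hf.2.2 (f.symm x) (f.symm y) (hmem' x hx) (hmem' y hy)
      rw [Equiv.apply_symm_apply, Equiv.apply_symm_apply] at this
      exact this.symm
  -- multiplicativity
  have hmul : ∀ f g : Equiv.Perm (Fin n), IsExtAut α f → IsExtAut α g →
      relComp (permRel f α) (permRel g α) = permRel (f.trans g) α := by
    intro f g hf hg
    funext x z
    apply propext
    simp only [relComp, permRel, Equiv.trans_apply]
    constructor
    · rintro ⟨y, h1, h2⟩
      have hm := hmem _ _ h1
      exact htrans _ _ _ ((hg.2.2 (f x) y hm.1 hm.2).mp h1) h2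
    · intro h
      have h0 : α (g (f x)) (g (f x)) := (hmem _ _ h).1
      have hfx : α (f x) (f x) := by
        by_contra hc
        rw [hg.1 _ hc] at h0
        exact hc h0
      exact ⟨f x, hfx, h⟩
  refine ⟨?_, ?_, ?_, hmul⟩
  · -- membership in the H-class
    intro f hf
    refine ⟨⟨⟨fun x y => y = f x, ?_⟩, ⟨fun x y => y = f.symm x, ?_⟩⟩,
      ⟨⟨permRel f α, ?_⟩, ⟨permRel f.symm α, ?_⟩⟩⟩
    · funext x z
      apply propext
      constructor
      · rintro ⟨y, rfl, h⟩; exact h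
      · intro h; exact ⟨f x, rfl, h⟩
    · funext x z
      apply propext
      constructor
      · rintro ⟨y, rfl, h⟩
        rwa [show permRel f α (f.symm x) z = α (f (f.symm x)) z from rfl,
          Equiv.apply_symm_apply] at h
      · intro h
        refine ⟨f.symm x, rfl, ?_⟩
        show α (f (f.symm x)) z
        rwa [Equiv.apply_symm_apply]
    · funext x z
      apply propext
      constructor
      · rintro ⟨y, h1, h2⟩
        have hm := hmem _ _ h1
        exact htrans _ _ _ ((hf.2.2 x y hm.1 hm.2).mp h1) h2
      · intro h
        have h0 : α (f x) (f x) := (hmem _ _ h).1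
        have hx : α x x := by
          by_contra hc
          rw [hf.1 _ hc] at h0
          exact hc h0
        exact ⟨x, hx, h⟩
    · rw [hmul f f.symm hf (hinv f hf), Equiv.self_trans_symm]
      rfl
  · -- injectivity
    intro f g hf hg heq
    apply Equiv.ext
    intro x
    by_cases hx : α x x
    · have hfx := hf.2.1 x hx
      have hgx := hg.2.1 x hx
      have h1 : α (g x) (f x) := by
        have := congrFun (congrFun heq x) (f x)
        rw [show permRel f α x (f x) = α (f x) (f x) from rfl] at this
        rw [show permRel g α x (f x) = α (g x) (f x) from rfl] at this
        rw [← this]; exact hfx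
      have h2 : α (f x) (g x) := by
        have := congrFun (congrFun heq x) (g x)
        rw [show permRel f α x (g x) = α (f x) (g x) from rfl] at this
        rw [show permRel g α x (g x) = α (g x) (g x) from rfl] at this
        rw [this]; exact hgx
      exact hanti _ _ hfx hgx h2 h1
    · rw [hf.1 x hx, hg.1 x hx]
  · -- surjectivity
    intro β hβ
    obtain ⟨⟨⟨γL, hγL⟩, ⟨δL, hδL⟩⟩, ⟨⟨γR, hγR⟩, ⟨δR, hδR⟩⟩⟩ := hβ
    have hβα : relComp β α = β := by rw [← hγL, relComp_assoc, hidem]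
    have hαβ : relComp α β = β := by rw [← hγR, ← relComp_assoc, hidem]
    have hoff : ∀ x, ¬ α x x → ∀ y, ¬ β x y := by
      intro x hx y h
      rw [← hαβ] at h
      obtain ⟨z, h1, _⟩ := h
      exact hx (hmem _ _ h1).1
    have hrow : ∀ x, α x x → ∃ t, α t t ∧ ∀ y, (β t y ↔ α x y) := by
      intro x hx
      have h1 : relComp δL β x x := by rw [hδL]; exact hx
      obtain ⟨t, hδ, hβt⟩ := h1
      have htt : α t t := by
        by_contra hc
        exact hoff t hc x hβt
      refine ⟨t, htt, fun y => ⟨?_, ?_⟩⟩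
      · intro h
        have : relComp δL β x y := ⟨t, hδ, h⟩
        rwa [hδL] at this
      · intro h
        have : relComp β α t y := ⟨x, hβt, h⟩
        rwa [hβα] at this
    -- the map F on T
    let S := {x : Fin n // α x x}
    let F : S → S := fun x => ⟨Classical.choose (hrow x.1 x.2),
      (Classical.choose_spec (hrow x.1 x.2)).1⟩
    have hFspec : ∀ (x : S) (y : Fin n), β (F x).1 y ↔ α x.1 y :=
      fun x => (Classical.choose_spec (hrow x.1 x.2)).2
    have hFinj : Function.Injective F := by
      intro x x' h
      have h1 : ∀ y, α x.1 y ↔ α x'.1 y := by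
        intro y
        rw [← hFspec x y, ← hFspec x' y, h]
      have h2 : α x.1 x'.1 := (h1 x'.1).mpr x'.2
      have h3 : α x'.1 x.1 := by
        have := (h1 x.1).mp x.2
        exact this
      exact Subtype.ext (hanti _ _ x.2 x'.2 h2 h3)
    have hFbij : Function.Bijective F := (Finite.injective_iff_bijective).mp hFinj
    let E : S ≃ S := Equiv.ofBijective F hFbij
    let f : Equiv.Perm (Fin n) := Equiv.Perm.subtypeCongr E.symm (Equiv.refl {x : Fin n // ¬ α x x})
    have hfixf : ∀ x, ¬ α x x → f x = x := by
      intro x hx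
      exact Equiv.Perm.subtypeCongr.right_apply E.symm (Equiv.refl _) hx
    have hfT : ∀ x (hx : α x x), f x = (E.symm ⟨x, hx⟩).1 := by
      intro x hx
      exact Equiv.Perm.subtypeCongr.left_apply E.symm (Equiv.refl _) hx
    have hfmem : ∀ x, α x x → α (f x) (f x) := by
      intro x hx
      rw [hfT x hx]
      exact (E.symm ⟨x, hx⟩).2
    have hβeq : β = permRel f α := by
      funext x y
      apply propext
      by_cases hx : α x x
      · have hE : (F (E.symm ⟨x, hx⟩)).1 = x := by
          have : E (E.symm ⟨x, hx⟩) = ⟨x, hx⟩ := Equiv.apply_symm_apply E _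
          exact congrArg Subtype.val this
        have := hFspec (E.symm ⟨x, hx⟩) y
        rw [hE] at this
        rw [show permRel f α x y = α (f x) y from rfl, hfT x hx]
        exact this
      · constructor
        · intro h; exact absurd h (hoff x hx y)
        · intro h
          rw [show permRel f α x y = α (f x) y from rfl, hfixf x hx] at h
          exact absurd h (hisol x hx y).1
    have hmono : ∀ x y, α x y → α (f x) (f y) := by
      intro x y h
      have hm := hmem _ _ h
      have h1 : β y (f y) := by
        rw [hβeq]
        exact hfmem y hm.2
      have h2 : relComp α β x (f y) := ⟨y, h, h1⟩
      rw [hαβ, hβeq] at h2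
      exact h2
    have hiff : ∀ x y, α x x → α y y → (α x y ↔ α (f x) (f y)) := by
      intro x y hx hy
      refine ⟨hmono x y, ?_⟩
      intro h
      -- finiteness trick: f maps the relation injectively into itself
      let R := {p : Fin n × Fin n // α p.1 p.2}
      let Φ : R → R := fun p => ⟨(f p.1.1, f p.1.2), hmono _ _ p.2⟩
      have hΦinj : Function.Injective Φ := by
        intro p q hpq
        have h1 : f p.1.1 = f q.1.1 := congrArg (fun r => r.1.1) hpq
        have h2 : f p.1.2 = f q.1.2 := congrArg (fun r => r.1.2) hpq
        apply Subtype.ext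
        exact Prod.ext (f.injective h1) (f.injective h2)
      have hΦsurj : Function.Surjective Φ :=
        (Finite.injective_iff_surjective).mp hΦinj
      obtain ⟨q, hq⟩ := hΦsurj ⟨(f x, f y), h⟩
      have h1 : f q.1.1 = f x := congrArg (fun r => r.1.1) hq
      have h2 : f q.1.2 = f y := congrArg (fun r => r.1.2) hq
      have := q.2
      rwa [f.injective h1, f.injective h2] at this
    exact ⟨f, ⟨hfixf, hfmem, hiff⟩, hβeq⟩
end

section
/- Let Ω be a set and let A be an n×n matrix whose entries a_{ij} are subsets of Ω, with matrix multiplication (AB)_{ij} = ⋃_{k=1}^n (a_{ik} ∩ b_{kj}). Then A is idempotent (A·A = A) if and only if for every ω ∈ Ω the binary relation α_ω = {(i,j) : ω ∈ a_{ij}} on X = {1,…,n} is a pseudo-order. -/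
/-- Multiplication of `n × n` matrices with entries in the powerset lattice of `Ω`:
`(A * B) i j = ⋃ k, (A i k ∩ B k j)`. -/
def setMatMul {Ω : Type*} {n : ℕ} (A B : Matrix (Fin n) (Fin n) (Set Ω)) :
    Matrix (Fin n) (Fin n) (Set Ω) :=
  Matrix.of fun i j => ⋃ k, A i k ∩ B k j

section Aux
variable {X : Type*} (α : X → X → Prop)

/-- splitting property gives chains of any length -/
lemma exists_chain (hsplit : ∀ x y, α x y → ∃ k, α x k ∧ α k y) :
    ∀ m : ℕ, ∀ x y, α x y → ∃ c : ℕ → X, c 0 = x ∧ c (m + 1) = y ∧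
      ∀ i ≤ m, α (c i) (c (i + 1)) := by
  intro m
  induction m with
  | zero =>
    intro x y h
    exact ⟨fun i => if i = 0 then x else y, by simp, by simp, by
      intro i hi; interval_cases i; simpa⟩
  | succ m ih =>
    intro x y h
    obtain ⟨c, hc0, hcm, hstep⟩ := ih x y h
    obtain ⟨k, hk1, hk2⟩ := hsplit x (c 1) (hc0 ▸ hstep 0 (Nat.zero_le _))
    refine ⟨fun i => match i with | 0 => x | 1 => k | (i+2) => c (i+1), rfl, hcm, ?_⟩
    intro i hi
    match i with
    | 0 => exact hk1
    | 1 => exact hk2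
    | (i+2) => exact hstep (i+1) (by omega)

lemma chain_trans (htrans : ∀ x y z, α x y → α y z → α x z)
    (c : ℕ → X) (m : ℕ) (hstep : ∀ i ≤ m, α (c i) (c (i + 1))) :
    ∀ j ≤ m + 1, ∀ i < j, α (c i) (c j) := by
  intro j
  induction j with
  | zero => omega
  | succ j ih =>
    intro hj i hi
    rcases Nat.lt_or_ge i j with h | h
    · exact htrans _ _ _ (ih (by omega) i h) (hstep j (by omega))
    · have : i = j := by omega
      subst this
      exact hstep i (by omega)

end Aux

/-- An `n × n` matrix `A` with entries in the powerset of `Ω` is idempotent iff for every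
`ω ∈ Ω` the cut relation `α_ω = {(i,j) : ω ∈ a_{ij}}` is a pseudo-order. -/
theorem setMat_idempotent_iff_cuts_pseudoOrder {Ω : Type*} {n : ℕ}
    (A : Matrix (Fin n) (Fin n) (Set Ω)) :
    setMatMul A A = A ↔ ∀ ω : Ω, IsPseudoOrder fun i j => ω ∈ A i j := by
  constructor
  · intro hA ω
    have hmem : ∀ i j : Fin n, ω ∈ A i j ↔ ∃ k, ω ∈ A i k ∧ ω ∈ A k j := by
      intro i j
      conv_lhs => rw [← hA]
      simp [setMatMul]
    set α : Fin n → Fin n → Prop := fun i j => ω ∈ A i j with hα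
    have htrans : ∀ x y z, α x y → α y z → α x z := by
      intro x y z h1 h2
      exact (hmem x z).2 ⟨y, h1, h2⟩
    have hsplit : ∀ x y, α x y → ∃ k, α x k ∧ α k y := fun x y h => (hmem x y).1 h
    refine ⟨htrans, ?_⟩
    intro x y h
    obtain ⟨c, hc0, hcm, hstep⟩ := exists_chain α hsplit (n + 1) x y h
    -- pigeonhole among c 0, ..., c (n+1): n+2 values
    have : ∃ i j : Fin (n + 2), i < j ∧ c i = c j := by
      have hcard : Fintype.card (Fin n) < Fintype.card (Fin (n + 2)) := by simp
      obtain ⟨i, j, hne, heq⟩ :=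
        Fintype.exists_ne_map_eq_of_card_lt (fun i : Fin (n + 2) => c i) hcard
      rcases lt_or_gt_of_ne hne with h' | h'
      · exact ⟨i, j, h', heq⟩
      · exact ⟨j, i, h', heq.symm⟩
    obtain ⟨i, j, hij, hceq⟩ := this
    have htr := chain_trans α htrans c (n + 1) hstep
    refine ⟨c i, ?_, ?_, ?_⟩
    · have : α (c i) (c j) := htr j (by omega) i (by exact_mod_cast hij)
      rwa [← hceq] at this
    · rcases Nat.eq_zero_or_pos (i : ℕ) with h0 | h0
      · left; rw [← hc0, h0]
      · right; rw [← hc0]; exact htr i (by omega) 0 h0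
    · right
      rw [← hcm]
      exact htr (n + 2) le_rfl i i.isLt
  · intro h
    ext i j ω
    simp only [setMatMul, Matrix.of_apply, Set.mem_iUnion, Set.mem_inter_iff]
    obtain ⟨htrans, hps⟩ := h ω
    constructor
    · rintro ⟨k, h1, h2⟩
      exact htrans i k j h1 h2
    · intro hij
      obtain ⟨p, hpp, hxp, hpy⟩ := hps i j hij
      refine ⟨p, ?_, ?_⟩
      · rcases hxp with rfl | h' ;· exact hpp
        exact h'
      · rcases hpy with rfl | h' ;· exact hpp
        exact h'
end

section
/- Let L be the m-element chain 0 < 1 < … < m−1 and let A be an n×n matrix over L with multiplication (AB)_{ij} = max_k min(a_{ik}, b_{kj}). Then A is idempotent (A·A = A) if and only if for each k ∈ {1, …, m−1} the cut relation α_k = {(i,j) : a_{ij} ≥ k} on X = {1,…,n} is a pseudo-order; these relations automatically form a nested sequence α_1 ⊇ α_2 ⊇ … ⊇ α_{m−1}. -/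
/-- Multiplication of `n × n` matrices over the `m`-element chain `{0 < 1 < ⋯ < m-1}`
(realized as `Fin m`): `(A * B) i j = max_k min (A i k) (B k j)`. -/
noncomputable def chainMatMul {m n : ℕ} [NeZero m]
    (A B : Matrix (Fin n) (Fin n) (Fin m)) : Matrix (Fin n) (Fin n) (Fin m) :=
  Matrix.of fun i j => Finset.univ.sup fun k => A i k ⊓ B k j

/-- A matrix `A` over the `m`-element chain is idempotent iff for each `k ∈ {1,…,m-1}` the
cut relation `α_k = {(i,j) : a_{ij} ≥ k}` is a pseudo-order; moreover these cut relations
automatically form a nested sequence `α_1 ⊇ α_2 ⊇ ⋯ ⊇ α_{m-1}`. -/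
theorem chainMat_idempotent_iff_cuts_pseudoOrder {m n : ℕ} [NeZero m]
    (A : Matrix (Fin n) (Fin n) (Fin m)) :
    (chainMatMul A A = A ↔
      ∀ k : Fin m, k ≠ 0 → IsPseudoOrder fun i j => k ≤ A i j) ∧
    (∀ k k' : Fin m, k ≤ k' → ∀ i j, k' ≤ A i j → k ≤ A i j) := by
  have hbot : (⊥ : Fin m) = 0 := rfl
  refine ⟨?_, fun k k' hkk' i j h => le_trans hkk' h⟩
  constructor
  · -- idempotent → cuts are pseudo-orders
    intro h k hk
    have hkpos : (⊥ : Fin m) < k := by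
      rw [hbot]
      exact lt_of_le_of_ne (hbot ▸ bot_le) (Ne.symm hk)
    have htrans : ∀ x y z : Fin n, k ≤ A x y → k ≤ A y z → k ≤ A x z := by
      intro x y z h1 h2
      have : k ≤ Finset.univ.sup (fun t => A x t ⊓ A t z) :=
        le_trans (le_inf h1 h2) (Finset.le_sup (f := fun t => A x t ⊓ A t z) (Finset.mem_univ y))
      have : k ≤ (chainMatMul A A) x z := this
      rwa [h] at this
    have hsplit : ∀ x y : Fin n, k ≤ A x y → ∃ t, k ≤ A x t ∧ k ≤ A t y := by
      intro x y hxy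
      have h1 : k ≤ (chainMatMul A A) x y := by rw [h]; exact hxy
      rw [show (chainMatMul A A) x y = Finset.univ.sup (fun t => A x t ⊓ A t y) from rfl,
        Finset.le_sup_iff hkpos] at h1
      obtain ⟨t, -, ht⟩ := h1
      exact ⟨t, (le_inf_iff.mp ht).1, (le_inf_iff.mp ht).2⟩
    -- build chains of arbitrary length
    have hchain : ∀ L : ℕ, ∀ x y : Fin n, k ≤ A x y →
        ∃ v : ℕ → Fin n, v 0 = x ∧ v (L + 1) = y ∧ ∀ i ≤ L, k ≤ A (v i) (v (i + 1)) := by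
      intro L
      induction L with
      | zero =>
        intro x y hxy
        refine ⟨fun i => if i = 0 then x else y, by simp, by simp, ?_⟩
        intro i hi
        interval_cases i
        simpa using hxy
      | succ L ih =>
        intro x y hxy
        obtain ⟨t, hxt, hty⟩ := hsplit x y hxy
        obtain ⟨w, hw0, hwL, hws⟩ := ih t y hty
        refine ⟨fun i => if i = 0 then x else w (i - 1), by simp, by simp [hwL], ?_⟩
        intro i hi
        rcases i with _ | j
        · simpa [hw0] using hxt
        · have h1 : (j + 1 : ℕ) ≠ 0 := by omega
          have h2 : (j + 2 : ℕ) ≠ 0 := by omega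
          simp only [h1, h2, if_neg, ite_false]
          have : j ≤ L := by omega
          simpa using hws j this
    -- transitivity along a chain
    have hchaintr : ∀ (v : ℕ → Fin n) (L : ℕ), (∀ i ≤ L, k ≤ A (v i) (v (i + 1))) →
        ∀ a b, a < b → b ≤ L + 1 → k ≤ A (v a) (v b) := by
      intro v L hv a b hab hbL
      induction b with
      | zero => omega
      | succ b ihb =>
        rcases Nat.lt_or_ge a b with hlt | hge
        · exact htrans _ _ _ (ihb hlt (by omega)) (hv b (by omega))
        · have : a = b := by omega
          subst this
          exact hv a (by omega)
    refine ⟨htrans, ?_⟩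
    intro x y hxy
    obtain ⟨v, hv0, hvL, hvs⟩ := hchain n x y hxy
    have main : ∀ a b : ℕ, a < b → b ≤ n + 1 → v a = v b →
        ∃ p, k ≤ A p p ∧ (x = p ∨ k ≤ A x p) ∧ (p = y ∨ k ≤ A p y) := by
      intro a b hab hb heq
      refine ⟨v a, ?_, ?_, ?_⟩
      · have := hchaintr v n hvs a b hab hb
        rwa [← heq] at this
      · rcases Nat.eq_zero_or_pos a with h0 | h0
        · left; rw [← hv0, h0]
        · right
          have := hchaintr v n hvs 0 a h0 (by omega)
          rwa [hv0] at this
      · rcases eq_or_ne b (n + 1) with hb1 | hb1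
        · left; rw [heq, hb1, hvL]
        · right
          have := hchaintr v n hvs b (n + 1) (by omega) le_rfl
          rwa [hvL, ← heq] at this
    obtain ⟨a, ha, b, hb, hne, heq⟩ := Finset.exists_ne_map_eq_of_card_lt_of_maps_to
      (s := Finset.range (n + 2)) (t := (Finset.univ : Finset (Fin n)))
      (by simp) (fun x _ => Finset.mem_univ (v x))
    rw [Finset.mem_range] at ha hb
    rcases lt_or_gt_of_ne hne with hab | hab
    · exact main a b hab (by omega) heq
    · exact main b a hab (by omega) heq.symm
  · -- cuts are pseudo-orders → idempotent
    intro h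
    refine Matrix.ext fun i j => le_antisymm ?_ ?_
    · show Finset.univ.sup (fun t => A i t ⊓ A t j) ≤ A i j
      refine Finset.sup_le fun t _ => ?_
      rcases eq_or_ne (A i t ⊓ A t j) 0 with h0 | h0
      · rw [h0]; exact hbot ▸ bot_le
      · exact (h _ h0).1 i t j inf_le_left inf_le_right
    · rcases eq_or_ne (A i j) 0 with h0 | h0
      · rw [h0]; exact hbot ▸ bot_le
      · obtain ⟨p, hpp, hip, hpj⟩ := (h _ h0).2 i j le_rfl
        have h1 : A i j ≤ A i p := by
          rcases hip with rfl | hip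
          · exact hpp
          · exact hip
        have h2 : A i j ≤ A p j := by
          rcases hpj with rfl | hpj
          · exact hpp
          · exact hpj
        show A i j ≤ Finset.univ.sup (fun t => A i t ⊓ A t j)
        exact le_trans (le_inf h1 h2) (Finset.le_sup (f := fun t => A i t ⊓ A t j) (Finset.mem_univ p))
end

section
/- Let L be the m-element chain and let A be an idempotent n×n matrix over L such that for every k ∈ {1,…,m−1} the cut relation α_k = {(i,j) : a_{ij} ≥ k} is a partial order on X = {1,…,n}. Then a matrix B over L belongs to the 𝓗-class of A if and only if B = P_f A for some permutation f of X that is a common automorphism of all the posets (X; α_k), k = 1,…,m−1. -/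
/-- Green's relation `𝓛` in the semigroup of matrices over the `m`-element chain. -/
def chainGreenL {m n : ℕ} [NeZero m] (A B : Matrix (Fin n) (Fin n) (Fin m)) : Prop :=
  (∃ C, chainMatMul C A = B) ∧ (∃ D, chainMatMul D B = A)

/-- Green's relation `𝓡` in the semigroup of matrices over the `m`-element chain. -/
def chainGreenR {m n : ℕ} [NeZero m] (A B : Matrix (Fin n) (Fin n) (Fin m)) : Prop :=
  (∃ C, chainMatMul A C = B) ∧ (∃ D, chainMatMul B D = A)

/-- Green's relation `𝓗 = 𝓛 ∩ 𝓡`. -/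
def chainGreenH {m n : ℕ} [NeZero m] (A B : Matrix (Fin n) (Fin n) (Fin m)) : Prop :=
  chainGreenL A B ∧ chainGreenR A B

/-- The permutation matrix of `f` over the chain `Fin m`: the `(i,j)` entry is the top
element `m-1` if `j = f i` and `0` otherwise. -/
noncomputable def chainPermMat {m n : ℕ} [NeZero m] (f : Equiv.Perm (Fin n)) :
    Matrix (Fin n) (Fin n) (Fin m) :=
  Matrix.of fun i j => if j = f i then ⊤ else ⊥

open Finset Matrix

theorem Equiv.Perm.eq_one_of_forall_rel_apply_self {α : Type*} [Finite α] (r : α → α → Prop)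
    [IsPartialOrder α r] (σ : Equiv.Perm α) (h : ∀ x, r (σ x) x) : σ = 1 := by
  obtain ⟨p, hp, hσp⟩ := (isOfFinOrder_of_finite σ).exists_pow_eq_one
  have hpow : ∀ j y, r ((σ ^ j) y) y := by
    intro j
    induction j with
    | zero => exact refl_of r
    | succ j ih =>
      intro y
      rw [pow_succ, Perm.mul_apply]
      exact _root_.trans_of r (ih (σ y)) (h y)
  ext x
  -- the orbit of `x` closes up after `p` steps, which gives `r x (σ x)`
  have hback : r x (σ x) := by
    simpa [← Perm.mul_apply, pow_sub_one_mul hp.ne', hσp] using hpow (p - 1) (σ x)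
  exact antisymm_of r (h x) hback

section ChainMatrix

variable {m n : ℕ} [NeZero m]

theorem Fin.eq_iff_forall_ne_zero_le_iff {a b : Fin m} :
    a = b ↔ ∀ k : Fin m, k ≠ 0 → (k ≤ a ↔ k ≤ b) := by
  refine ⟨by rintro rfl; simp, fun h => le_antisymm ?_ ?_⟩
  · rcases eq_or_ne a 0 with rfl | ha
    · exact Fin.zero_le b
    · exact (h a ha).1 le_rfl
  · rcases eq_or_ne b 0 with rfl | hb
    · exact Fin.zero_le a
    · exact (h b hb).2 le_rfl

theorem chainMatMul_apply (M N : Matrix (Fin n) (Fin n) (Fin m)) (i j : Fin n) :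
    chainMatMul M N i j = univ.sup fun l => M i l ⊓ N l j :=
  rfl

theorem le_chainMatMul (M N : Matrix (Fin n) (Fin n) (Fin m)) (i l j : Fin n) :
    M i l ⊓ N l j ≤ chainMatMul M N i j :=
  le_sup (f := fun l => M i l ⊓ N l j) (mem_univ l)

theorem chainMatMul_eq_top_iff {M N : Matrix (Fin n) (Fin n) (Fin m)} {i j : Fin n} :
    chainMatMul M N i j = ⊤ ↔ ∃ l, M i l = ⊤ ∧ N l j = ⊤ := by
  constructor
  · intro h
    obtain ⟨l, -, hl⟩ := exists_mem_eq_sup univ ⟨i, mem_univ i⟩ fun l => M i l ⊓ N l j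
    exact ⟨l, inf_eq_top_iff.1 (hl ▸ h)⟩
  · rintro ⟨l, hM, hN⟩
    have := le_chainMatMul M N i l j
    rwa [hM, hN, inf_idem, top_le_iff] at this

theorem chainMatMul_transpose (M N : Matrix (Fin n) (Fin n) (Fin m)) :
    (chainMatMul M N)ᵀ = chainMatMul Nᵀ Mᵀ := by
  ext i j
  simp [chainMatMul, inf_comm]

theorem chainPermMat_mul_apply (f : Equiv.Perm (Fin n)) (M : Matrix (Fin n) (Fin n) (Fin m))
    (i j : Fin n) : chainMatMul (chainPermMat f) M i j = M (f i) j := by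
  refine le_antisymm ?_ ?_
  · rw [chainMatMul_apply]
    refine Finset.sup_le fun l _ => ?_
    by_cases hl : l = f i
    · simp [chainPermMat, hl]
    · simp [chainPermMat, hl]
  · have := le_chainMatMul (chainPermMat f) M i (f i) j
    rwa [chainPermMat, of_apply, if_pos rfl, top_inf_eq] at this

theorem chainMatMul_permMat_apply (M : Matrix (Fin n) (Fin n) (Fin m)) (f : Equiv.Perm (Fin n))
    (i j : Fin n) : chainMatMul M (chainPermMat f) i j = M i (f⁻¹ j) := by
  refine le_antisymm ?_ ?_
  · rw [chainMatMul_apply]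
    refine Finset.sup_le fun l _ => ?_
    by_cases hl : j = f l
    · simp [chainPermMat, hl]
    · simp [chainPermMat, hl]
  · have := le_chainMatMul M (chainPermMat f) i (f⁻¹ j) j
    rwa [chainPermMat, of_apply, if_pos (by simp), inf_top_eq] at this

theorem chainGreenL_transpose_of_chainGreenR {A B : Matrix (Fin n) (Fin n) (Fin m)}
    (h : chainGreenR A B) : chainGreenL Aᵀ Bᵀ := by
  obtain ⟨⟨C, hC⟩, ⟨D, hD⟩⟩ := h
  exact ⟨⟨Cᵀ, by rw [← chainMatMul_transpose, hC]⟩, ⟨Dᵀ, by rw [← chainMatMul_transpose, hD]⟩⟩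

theorem chainGreenH_chainPermMat_mul {A : Matrix (Fin n) (Fin n) (Fin m)} {f : Equiv.Perm (Fin n)}
    (hf : ∀ i j, A (f i) (f j) = A i j) : chainGreenH A (chainMatMul (chainPermMat f) A) := by
  refine ⟨⟨⟨chainPermMat f, rfl⟩, ⟨chainPermMat f⁻¹, ?_⟩⟩,
      ⟨⟨chainPermMat f, ?_⟩, ⟨chainPermMat f⁻¹, ?_⟩⟩⟩
    <;> refine Matrix.ext fun i j => ?_
    <;> simp only [chainPermMat_mul_apply, chainMatMul_permMat_apply]
  · simp
  · simpa using (hf i (f⁻¹ j)).symm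
  · simpa using hf i j

section TopCut

variable {A : Matrix (Fin n) (Fin n) (Fin m)}
  (hdiag : ∀ i, A i i = ⊤) (hanti : ∀ i j, A i j = ⊤ → A j i = ⊤ → i = j)
  (htrans : ∀ i j l, A i j ⊓ A j l ≤ A i l)

include hdiag hanti in
theorem injective_of_diag_eq_top : Function.Injective A := fun t t' h =>
  hanti t t' (by rw [h]; exact hdiag t') (by rw [← h]; exact hdiag t)

include hdiag htrans in
theorem exists_row_eq_of_chainGreenL {B : Matrix (Fin n) (Fin n) (Fin m)} (hL : chainGreenL A B)
    (t : Fin n) : ∃ l, B l = A t := by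
  obtain ⟨⟨C, rfl⟩, ⟨D, hD⟩⟩ := hL
  obtain ⟨l, hDtl, hBlt⟩ := chainMatMul_eq_top_iff.1 (hD ▸ hdiag t)
  obtain ⟨p, hClp, hApt⟩ := chainMatMul_eq_top_iff.1 hBlt
  refine ⟨l, funext fun j => le_antisymm ?_ ?_⟩
  · calc chainMatMul C A l j = D t l ⊓ chainMatMul C A l j := by rw [hDtl, top_inf_eq]
      _ ≤ chainMatMul D (chainMatMul C A) t j := le_chainMatMul D _ t l j
      _ = A t j := by rw [hD]
  · calc A t j = A p t ⊓ A t j := by rw [hApt, top_inf_eq]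
      _ ≤ A p j := htrans p t j
      _ = C l p ⊓ A p j := by rw [hClp, top_inf_eq]
      _ ≤ chainMatMul C A l j := le_chainMatMul C A l p j

include hdiag hanti htrans in
theorem exists_perm_of_chainGreenL {B : Matrix (Fin n) (Fin n) (Fin m)} (hL : chainGreenL A B) :
    ∃ f : Equiv.Perm (Fin n), ∀ i j, B i j = A (f i) j := by
  choose r hr using exists_row_eq_of_chainGreenL hdiag htrans hL
  have hr_inj : r.Injective := fun t t' h =>
    injective_of_diag_eq_top hdiag hanti (by rw [← hr, ← hr, h])
  let e := Equiv.ofBijective r (Finite.injective_iff_bijective.1 hr_inj)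
  refine ⟨e.symm, fun i j => ?_⟩
  rw [← hr, show r (e.symm i) = i from e.apply_symm_apply i]

include hdiag hanti htrans in
theorem exists_perm_of_chainGreenH {B : Matrix (Fin n) (Fin n) (Fin m)} (hH : chainGreenH A B) :
    ∃ f : Equiv.Perm (Fin n), (∀ i j, A (f i) (f j) = A i j) ∧ ∀ i j, B i j = A (f i) j := by
  obtain ⟨f, hf⟩ := exists_perm_of_chainGreenL hdiag hanti htrans hH.1
  obtain ⟨g, hg⟩ := exists_perm_of_chainGreenL (A := Aᵀ) hdiag (fun i j h h' => hanti i j h' h)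
    (fun i j l => by simpa [inf_comm] using htrans l j i)
    (chainGreenL_transpose_of_chainGreenR hH.2)
  have : IsPartialOrder (Fin n) (fun i j => A i j = ⊤) :=
    { refl := hdiag
      trans := fun i j l hij hjl => top_unique (by simpa [hij, hjl] using htrans i j l)
      antisymm := hanti }
  have hfg : f * g = 1 :=
    Equiv.Perm.eq_one_of_forall_rel_apply_self (fun i j => A i j = ⊤) _ fun j => by
      simpa [hdiag, ← hf] using hg j (g j)
  refine ⟨f, fun i j => ?_, hf⟩
  simpa [← hf, eq_inv_of_mul_eq_one_right hfg] using hg (f j) i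

end TopCut

end ChainMatrix

/-- Let `A` be an idempotent matrix over the `m`-element chain all of whose cut relations
`α_k = {(i,j) : a_{ij} ≥ k}` (`k = 1,…,m-1`) are partial orders. Then `B` belongs to the
`𝓗`-class of `A` iff `B = P_f A` for some permutation `f` of `X = {1,…,n}` that is a
common automorphism of all the posets `(X; α_k)`. -/
theorem chain_hClass_iff {m n : ℕ} [NeZero m]
    (A : Matrix (Fin n) (Fin n) (Fin m))
    (hidem : chainMatMul A A = A)
    (hpo : ∀ k : Fin m, k ≠ 0 →
      (∀ i, k ≤ A i i) ∧
      (∀ i j, k ≤ A i j → k ≤ A j i → i = j) ∧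
      (∀ i j l, k ≤ A i j → k ≤ A j l → k ≤ A i l))
    (B : Matrix (Fin n) (Fin n) (Fin m)) :
    chainGreenH A B ↔
      ∃ f : Equiv.Perm (Fin n),
        (∀ k : Fin m, k ≠ 0 → ∀ i j, (k ≤ A i j ↔ k ≤ A (f i) (f j))) ∧
        B = chainMatMul (chainPermMat f) A := by
  have htrans : ∀ i j l, A i j ⊓ A j l ≤ A i l := fun i j l =>
    (le_chainMatMul A A i j l).trans_eq (by rw [hidem])
  constructor
  · intro hH
    rcases subsingleton_or_nontrivial (Fin m) with _ | _
    · exact ⟨1, fun k hk => absurd (Subsingleton.elim k 0) hk, Subsingleton.elim _ _⟩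
    have htop : (⊤ : Fin m) ≠ 0 := top_ne_bot
    obtain ⟨f, hf, hB⟩ := exists_perm_of_chainGreenH (fun i => top_le_iff.1 ((hpo ⊤ htop).1 i))
      (fun i j hij hji => (hpo ⊤ htop).2.1 i j hij.ge hji.ge) htrans hH
    exact ⟨f, fun k _ i j => by rw [hf], Matrix.ext fun i j => by rw [hB, chainPermMat_mul_apply]⟩
  · rintro ⟨f, hf, rfl⟩
    exact chainGreenH_chainPermMat_mul fun i j =>
      (Fin.eq_iff_forall_ne_zero_le_iff.2 fun k hk => hf k hk i j).symm
end

section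
/- Let L be a bounded distributive lattice and A an n×n matrix over L. Then A is nilpotent (A^k = 0 for some k ≥ 1) if and only if A^n = 0. -/
/-- Powers of a matrix: `A^0 = I` and `A^(k+1) = A^k * A` (so `A^1 = A`). -/
def matPow {L : Type*} [Lattice L] [BoundedOrder L] {n : ℕ}
    (A : Matrix (Fin n) (Fin n) L) : ℕ → Matrix (Fin n) (Fin n) L
  | 0 => idMat
  | k + 1 => bMatMul (matPow A k) A

/-- The all-zero matrix. -/
def botMat {L : Type*} [Lattice L] [BoundedOrder L] {n : ℕ} : Matrix (Fin n) (Fin n) L :=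
  Matrix.of fun _ _ => ⊥

section Aux

variable {L : Type*} [DistribLattice L] [BoundedOrder L] {n : ℕ}

/-- value of a word (path) of length m -/
def wVal (A : Matrix (Fin n) (Fin n) L) (w : ℕ → Fin n) (m : ℕ) : L :=
  (Finset.range m).inf fun t => A (w t) (w (t+1))

lemma pow_le (A : Matrix (Fin n) (Fin n) L) (x : L) :
    ∀ (m : ℕ) (j : Fin n) (c : L) (i : Fin n),
    (∀ w : ℕ → Fin n, w 0 = i → w m = j → wVal A w m ⊓ c ≤ x) →
    matPow A m i j ⊓ c ≤ x := by
  intro m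
  induction m with
  | zero =>
    intro j c i h
    by_cases hij : i = j
    · have := h (fun _ => i) rfl (by simp [hij])
      simpa [wVal, matPow, idMat, hij] using this
    · simp [matPow, idMat, hij]
  | succ m ih =>
    intro j c i h
    have heq : matPow A (m+1) i j ⊓ c =
        Finset.univ.sup fun k => matPow A m i k ⊓ (A k j ⊓ c) := by
      rw [show matPow A (m+1) i j = Finset.univ.sup fun k => matPow A m i k ⊓ A k j from rfl,
        Finset.sup_inf_distrib_right]
      simp [inf_assoc]
    rw [heq]
    apply Finset.sup_le
    intro k _
    apply ih k (A k j ⊓ c) i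
    intro w hw0 hwm
    have hx := h (fun t => if t ≤ m then w t else j)
      (by simp [hw0]) (by simp)
    have hval : wVal A (fun t => if t ≤ m then w t else j) (m+1) =
        wVal A w m ⊓ A k j := by
      rw [wVal, Finset.range_add_one, Finset.inf_insert, inf_comm]
      congr 1
      · apply Finset.inf_congr rfl
        intro t ht
        simp only [Finset.mem_range] at ht
        simp [Nat.le_of_lt ht, Nat.succ_le_of_lt ht]
      · simp [hwm]
    rw [hval] at hx
    calc wVal A w m ⊓ (A k j ⊓ c) = wVal A w m ⊓ A k j ⊓ c := by rw [inf_assoc]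
    _ ≤ x := hx

lemma word_le_pow (A : Matrix (Fin n) (Fin n) L) :
    ∀ (m : ℕ) (w : ℕ → Fin n), wVal A w m ≤ matPow A m (w 0) (w m) := by
  intro m
  induction m with
  | zero => intro w; simp [wVal, matPow, idMat]
  | succ m ih =>
    intro w
    have h1 : wVal A w (m+1) = wVal A w m ⊓ A (w m) (w (m+1)) := by
      rw [wVal, Finset.range_add_one, Finset.inf_insert, inf_comm]; rfl
    rw [h1]
    refine (inf_le_inf_right _ (ih w)).trans ?_
    exact Finset.le_sup (f := fun k => matPow A m (w 0) k ⊓ A k (w (m+1)))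
      (Finset.mem_univ (w m))

lemma pump_once (A : Matrix (Fin n) (Fin n) L) (w : ℕ → Fin n) (m a b : ℕ)
    (hab : a < b) (hbm : b ≤ m) (hw : w a = w b) :
    ∃ w' : ℕ → Fin n, w' 0 = w 0 ∧ w' (m + (b - a)) = w m ∧
      wVal A w m ≤ wVal A w' (m + (b - a)) ∧ w' a = w a ∧ w' b = w b := by
  set c := b - a with hc
  refine ⟨fun s => if s < b then w s else w (s - c), ?_, ?_, ?_, ?_, ?_⟩
  · have : (0 : ℕ) < b := by omega
    simp [this]
  · have h1 : ¬ (m + c < b) := by omega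
    simp only [h1, if_neg, not_false_iff]
    congr 1
    omega
  · apply Finset.le_inf
    intro t ht
    simp only [Finset.mem_range] at ht
    by_cases h1 : t + 1 < b
    · have h2 : t < b := by omega
      simp only [h1, h2, if_pos]
      exact Finset.inf_le (Finset.mem_range.mpr (by omega))
    · by_cases h2 : t + 1 = b
      · have h3 : t < b := by omega
        simp only [h3, if_pos, h1, if_neg, not_false_iff]
        have h5 : t + 1 - c = a := by omega
        rw [h5, hw, ← h2]
        exact Finset.inf_le (Finset.mem_range.mpr (by omega))
      · have h3 : ¬ (t < b) := by omega
        simp only [h3, h1, if_neg, not_false_iff]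
        have h5 : t + 1 - c = (t - c) + 1 := by omega
        rw [h5]
        exact Finset.inf_le (Finset.mem_range.mpr (by omega))
  · simp [hab]
  · have h1 : ¬ (b < b) := lt_irrefl b
    simp only [h1, if_neg, not_false_iff]
    rw [show b - c = a by omega, hw]

lemma pump_many (A : Matrix (Fin n) (Fin n) L) (w : ℕ → Fin n) (m a b : ℕ)
    (hab : a < b) (hbm : b ≤ m) (hw : w a = w b) :
    ∀ t : ℕ, ∃ w' : ℕ → Fin n, w' 0 = w 0 ∧ w' (m + t * (b - a)) = w m ∧
      wVal A w m ≤ wVal A w' (m + t * (b - a)) := by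
  have key : ∀ t : ℕ, ∃ w' : ℕ → Fin n, w' 0 = w 0 ∧ w' (m + t * (b - a)) = w m ∧
      wVal A w m ≤ wVal A w' (m + t * (b - a)) ∧ w' a = w a ∧ w' b = w b := by
    intro t
    induction t with
    | zero => exact ⟨w, rfl, by simp, by simp, rfl, rfl⟩
    | succ t ih =>
      obtain ⟨w', h0, hm, hv, ha, hb⟩ := ih
      obtain ⟨w'', g0, gm, gv, ga, gb⟩ := pump_once A w' (m + t * (b - a)) a b hab
        (by omega) (by rw [ha, hb, hw])
      refine ⟨w'', by rw [g0, h0], ?_, ?_, by rw [ga, ha], by rw [gb, hb]⟩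
      · rw [show m + (t+1) * (b - a) = m + t * (b - a) + (b - a) by ring, gm, hm]
      · rw [show m + (t+1) * (b - a) = m + t * (b - a) + (b - a) by ring]
        exact (hv.trans gv)
  intro t
  obtain ⟨w', h0, hm, hv, _, _⟩ := key t
  exact ⟨w', h0, hm, hv⟩

lemma pow_mono_zero (A : Matrix (Fin n) (Fin n) L) (k : ℕ) (hk : matPow A k = botMat) :
    ∀ m, k ≤ m → matPow A m = botMat := by
  intro m hm
  induction m with
  | zero => exact Nat.le_zero.mp hm ▸ hk
  | succ m ih =>
    rcases Nat.lt_or_ge k (m+1) with h | h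
    · have := ih (by omega)
      show bMatMul (matPow A m) A = botMat
      rw [this]
      funext i j
      simp [bMatMul, botMat]
    · have : k = m + 1 := by omega
      exact this ▸ hk

end Aux


/-- A matrix `A` over a bounded distributive lattice is nilpotent (`A^k = 0` for some
`k ≥ 1`) iff `A^n = 0`. -/
theorem nilpotent_iff_pow_n_eq_zero {L : Type*} [DistribLattice L] [BoundedOrder L]
    {n : ℕ} (A : Matrix (Fin n) (Fin n) L) :
    (∃ k : ℕ, 1 ≤ k ∧ matPow A k = botMat) ↔ matPow A n = botMat := by
  constructor
  · rintro ⟨k, hk1, hk⟩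
    funext i j
    show matPow A n i j = ⊥
    refine le_antisymm ?_ bot_le
    have := pow_le A ⊥ n j ⊤ i ?_
    · simpa using this
    intro w hw0 hwn
    simp only [inf_top_eq]
    -- pigeonhole: among w 0, ..., w n there is a repeat
    obtain ⟨a, ha, b, hb, hne, hw⟩ :=
      Finset.exists_ne_map_eq_of_card_lt_of_maps_to
        (s := Finset.range (n+1)) (t := (Finset.univ : Finset (Fin n)))
        (by simp) (fun x _ => Finset.mem_univ (w x))
    simp only [Finset.mem_range] at ha hb
    wlog hab : a < b generalizing a b
    · exact this b a hne.symm hw.symm hb ha (by omega)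
    obtain ⟨w', h0, hm, hv⟩ := pump_many A w n a b hab (by omega) hw k
    have hle : wVal A w' (n + k * (b - a)) ≤ matPow A (n + k * (b - a)) (w' 0) (w' (n + k * (b-a))) :=
      word_le_pow A _ w'
    have hz : matPow A (n + k * (b - a)) = botMat :=
      pow_mono_zero A k hk _ (by nlinarith [Nat.sub_pos_of_lt hab])
    rw [hz] at hle
    have : wVal A w n ≤ (⊥ : L) := hv.trans (hle.trans (by simp [botMat]))
    exact this
  · intro h
    rcases n with _ | m
    · exact ⟨1, le_refl 1, funext fun i => i.elim0⟩
    · exact ⟨m + 1, Nat.succ_le_succ (Nat.zero_le m), h⟩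
end

section
/- Let L be a bounded distributive lattice and A an n×n matrix over L. Then A is nilpotent (A^k = 0 for some k ≥ 1) if and only if every directed cycle in the graph corresponding to A has capacity 0: for every ℓ ≥ 1 and every sequence v_0, v_1, …, v_ℓ of indices in {1,…,n} with v_0 = v_ℓ, the meet a_{v_0 v_1} ∧ a_{v_1 v_2} ∧ … ∧ a_{v_{ℓ−1} v_ℓ} equals 0. -/
lemma pathCap_le_matPow {L : Type*} [Lattice L] [BoundedOrder L] {n : ℕ}
    (A : Matrix (Fin n) (Fin n) L) (k : ℕ) (v : ℕ → Fin n) :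
    (Finset.range k).inf (fun i => A (v i) (v (i + 1))) ≤ matPow A k (v 0) (v k) := by
  induction k with
  | zero => simp [matPow, idMat]
  | succ k ih =>
    have h1 : matPow A (k+1) (v 0) (v (k+1)) =
        Finset.univ.sup (fun m => matPow A k (v 0) m ⊓ A m (v (k+1))) := rfl
    rw [h1, Finset.range_add_one, Finset.inf_insert]
    refine le_trans ?_ (Finset.le_sup (Finset.mem_univ (v k)))
    exact le_inf (inf_le_right.trans ih) inf_le_left

lemma matPow_inf_le {L : Type*} [DistribLattice L] [BoundedOrder L] {n : ℕ}
    (A : Matrix (Fin n) (Fin n) L) (c : L) (k : ℕ) :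
    ∀ (i j : Fin n) (b : L),
      (∀ v : ℕ → Fin n, v 0 = i → v k = j →
        (Finset.range k).inf (fun t => A (v t) (v (t + 1))) ⊓ b ≤ c) →
      matPow A k i j ⊓ b ≤ c := by
  induction k with
  | zero =>
    intro i j b h
    by_cases hij : i = j
    · subst hij
      have := h (fun _ => i) rfl rfl
      simpa [matPow, idMat] using this
    · simp [matPow, idMat, hij]
  | succ k ih =>
    intro i j b h
    have h1 : matPow A (k+1) i j = Finset.univ.sup (fun m => matPow A k i m ⊓ A m j) := rfl
    rw [h1, Finset.sup_inf_distrib_right]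
    apply Finset.sup_le
    intro m _
    rw [inf_assoc]
    apply ih i m (A m j ⊓ b)
    intro v hv0 hvk
    set v' : ℕ → Fin n := fun t => if t ≤ k then v t else j with hv'
    have hv'0 : v' 0 = i := by simp [hv', hv0]
    have hv'k1 : v' (k+1) = j := by simp [hv']
    have hmain := h v' hv'0 hv'k1
    have hcap : (Finset.range (k+1)).inf (fun t => A (v' t) (v' (t+1))) =
        A m j ⊓ (Finset.range k).inf (fun t => A (v t) (v (t+1))) := by
      rw [Finset.range_add_one, Finset.inf_insert]
      congr 1
      · simp [hv', hvk]
      · apply Finset.inf_congr rfl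
        intro t ht
        simp only [Finset.mem_range] at ht
        simp [hv', ht.le, Nat.succ_le_of_lt ht]
    rw [hcap] at hmain
    calc (Finset.range k).inf (fun t => A (v t) (v (t+1))) ⊓ (A m j ⊓ b)
        ≤ (A m j ⊓ (Finset.range k).inf (fun t => A (v t) (v (t+1)))) ⊓ b := by
          refine le_inf (le_inf ?_ inf_le_left) ?_
          · exact inf_le_right.trans inf_le_left
          · exact inf_le_right.trans inf_le_right
      _ ≤ c := hmain

/-- A matrix `A` over a bounded distributive lattice is nilpotent iff every directed cycle
in the corresponding graph has capacity `0`: for every `ℓ ≥ 1` and every sequence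
`v 0, v 1, …, v ℓ` with `v 0 = v ℓ`, the meet `a_{v₀v₁} ⊓ ⋯ ⊓ a_{v_{ℓ-1}v_ℓ}` is `⊥`. -/
theorem nilpotent_iff_cycles_capacity_zero {L : Type*} [DistribLattice L] [BoundedOrder L]
    {n : ℕ} (A : Matrix (Fin n) (Fin n) L) :
    (∃ k : ℕ, 1 ≤ k ∧ matPow A k = botMat) ↔
      ∀ (ℓ : ℕ), 1 ≤ ℓ → ∀ v : ℕ → Fin n, v 0 = v ℓ →
        (Finset.range ℓ).inf (fun i => A (v i) (v (i + 1))) = ⊥ := by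
  constructor
  · rintro ⟨k, hk1, hk0⟩ ℓ hℓ v hv
    have hℓpos : 0 < ℓ := hℓ
    set w : ℕ → Fin n := fun t => v (t % ℓ) with hw
    have key : ∀ t : ℕ, (Finset.range ℓ).inf (fun i => A (v i) (v (i+1))) ≤ A (w t) (w (t+1)) := by
      intro t
      have hm : t % ℓ ∈ Finset.range ℓ := Finset.mem_range.mpr (Nat.mod_lt _ hℓpos)
      have heq : w (t+1) = v (t % ℓ + 1) := by
        have h2 : (t+1) % ℓ = (t % ℓ + 1) % ℓ := (Nat.mod_add_mod t ℓ 1).symm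
        by_cases hc : t % ℓ + 1 = ℓ
        · have : (t+1) % ℓ = 0 := by rw [h2, hc, Nat.mod_self]
          simp only [hw, this]
          rw [hc]
          exact hv
        · have hlt : t % ℓ + 1 < ℓ := lt_of_le_of_ne (Nat.mod_lt _ hℓpos) hc
          simp only [hw, h2, Nat.mod_eq_of_lt hlt]
      have := Finset.inf_le (f := fun i => A (v i) (v (i+1))) hm
      rw [heq]
      exact this
    have hle : (Finset.range ℓ).inf (fun i => A (v i) (v (i+1)))
        ≤ matPow A k (w 0) (w k) := by
      refine le_trans (Finset.le_inf fun t _ => key t) (pathCap_le_matPow A k w)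
    rw [hk0] at hle
    exact le_bot_iff.mp hle
  · intro h
    refine ⟨n + 1, by omega, ?_⟩
    funext i j
    show matPow A (n+1) i j = ⊥
    refine le_antisymm ?_ bot_le
    have := matPow_inf_le A ⊥ (n+1) i j ⊤ ?_
    · simpa using this
    intro v hv0 hvk
    obtain ⟨a, b, hab, heq⟩ := Fintype.exists_ne_map_eq_of_card_lt
      (fun t : Fin (n+2) => v t) (by simp)
    have hst : ∃ s t : ℕ, s < t ∧ t ≤ n + 1 ∧ v s = v t := by
      rcases hab.lt_or_gt with h' | h'
      · exact ⟨a.val, b.val, Fin.lt_def.mp h', Nat.lt_succ_iff.mp b.isLt, heq⟩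
      · exact ⟨b.val, a.val, Fin.lt_def.mp h', Nat.lt_succ_iff.mp a.isLt, heq.symm⟩
    obtain ⟨s, t, hst', htle, hvst⟩ := hst
    have hℓ' : 1 ≤ t - s := by omega
    have hcyc := h (t - s) hℓ' (fun i => v (s + i)) (by
      rw [Nat.add_zero, Nat.add_sub_cancel' (le_of_lt hst')]
      exact hvst)
    have hle : (Finset.range (n+1)).inf (fun t => A (v t) (v (t+1)))
        ≤ (Finset.range (t - s)).inf (fun i => A (v (s + i)) (v (s + i + 1))) := by
      refine Finset.le_inf fun i hi => ?_
      simp only [Finset.mem_range] at hi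
      have : s + i ∈ Finset.range (n+1) := Finset.mem_range.mpr (by omega)
      exact Finset.inf_le (f := fun t => A (v t) (v (t+1))) this
    have : (Finset.range (t - s)).inf (fun i => A (v (s + i)) (v (s + (i + 1)))) = ⊥ := hcyc
    rw [inf_top_eq]
    calc (Finset.range (n+1)).inf (fun t => A (v t) (v (t+1)))
        ≤ (Finset.range (t - s)).inf (fun i => A (v (s + i)) (v (s + i + 1))) := hle
      _ = ⊥ := this
end

section
/- Let L be a bounded distributive lattice in which the bottom element 0 is meet-irreducible (a ∧ b = 0 implies a = 0 or b = 0). Then an n×n matrix A over L is nilpotent (A^k = 0 for some k ≥ 1) if and only if A is conjugate to a strictly upper triangular matrix: there exist a strictly upper triangular matrix U and an invertible matrix C (i.e., CC' = C'C = I for some C') such that A = C⁻¹UC; equivalently, there exists a permutation π ∈ S_n such that P_{π}⁻¹ A P_{π} is strictly upper triangular. -/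
/-- Strictly upper triangular: nonzero entries lie strictly above the diagonal. -/
def StrictUpperTri {L : Type*} [Lattice L] [BoundedOrder L] {n : ℕ}
    (U : Matrix (Fin n) (Fin n) L) : Prop :=
  ∀ i j, U i j ≠ ⊥ → i < j

/-- Type synonym for topological sorting. -/
def TopoWrap (n : ℕ) : Type := Fin n

theorem topo_sort {n : ℕ} (r : Fin n → Fin n → Prop)
    (h : Irreflexive (Relation.TransGen r)) :
    ∃ π : Equiv.Perm (Fin n), ∀ a b, r a b → π a < π b := by
  classical
  letI : PartialOrder (TopoWrap n) :=
    { le := fun a b => a = b ∨ Relation.TransGen r a b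
      le_refl := fun a => Or.inl rfl
      le_trans := by
        rintro a b c (rfl | hab) (rfl | hbc)
        · exact Or.inl rfl
        · exact Or.inr hbc
        · exact Or.inr hab
        · exact Or.inr (hab.trans hbc)
      le_antisymm := by
        rintro a b (rfl | hab) (h2 | hba)
        · rfl
        · rfl
        · exact h2.symm
        · exact absurd (hab.trans hba) (h a) }
  letI : Fintype (TopoWrap n) := inferInstanceAs (Fintype (Fin n))
  letI : Fintype (LinearExtension (TopoWrap n)) := inferInstanceAs (Fintype (Fin n))
  have hc : Fintype.card (LinearExtension (TopoWrap n)) = n := Fintype.card_fin n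
  let e := monoEquivOfFin (LinearExtension (TopoWrap n)) hc
  let f : Fin n → Fin n := fun a => e.symm (toLinearExtension (α := TopoWrap n) a)
  have hinj : Function.Injective f := by
    intro a b hab
    have := e.symm.injective hab
    exact congrArg (fun (x : TopoWrap n) => (x : Fin n)) this
  refine ⟨Equiv.ofBijective f (Finite.injective_iff_bijective.mp hinj), ?_⟩
  intro a b hab
  have hne : a ≠ b := fun hEq => by subst hEq; exact h a (Relation.TransGen.single hab)
  have h1 : @LE.le (TopoWrap n) _ a b := Or.inr (Relation.TransGen.single hab)
  have h2 : toLinearExtension (α := TopoWrap n) a < toLinearExtension (α := TopoWrap n) b := by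
    refine lt_of_le_of_ne (toLinearExtension.monotone h1) ?_
    intro hEq
    exact hne (congrArg (fun (x : LinearExtension (TopoWrap n)) => (x : Fin n)) hEq)
  simpa [Equiv.ofBijective, f] using e.symm.strictMono h2

section Lemmas

variable {L : Type*} [DistribLattice L] [BoundedOrder L] {n : ℕ}

lemma bMatMul_apply (A B : Matrix (Fin n) (Fin n) L) (i j : Fin n) :
    bMatMul A B i j = Finset.univ.sup fun k => A i k ⊓ B k j := rfl

lemma bmul_assoc (A B C : Matrix (Fin n) (Fin n) L) :
    bMatMul (bMatMul A B) C = bMatMul A (bMatMul B C) := by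
  ext i j
  simp only [bMatMul_apply]
  calc (Finset.univ.sup fun l => (Finset.univ.sup fun k => A i k ⊓ B k l) ⊓ C l j)
      = Finset.univ.sup fun l => Finset.univ.sup fun k => (A i k ⊓ B k l) ⊓ C l j := by
        refine Finset.sup_congr rfl fun l _ => ?_
        rw [Finset.sup_inf_distrib_right]
    _ = Finset.univ.sup fun k => Finset.univ.sup fun l => A i k ⊓ (B k l ⊓ C l j) := by
        rw [Finset.sup_comm]
        exact Finset.sup_congr rfl fun k _ => Finset.sup_congr rfl fun l _ => inf_assoc ..
    _ = Finset.univ.sup fun k => A i k ⊓ Finset.univ.sup fun l => B k l ⊓ C l j := by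
        refine Finset.sup_congr rfl fun k _ => ?_
        rw [Finset.sup_inf_distrib_left]

lemma id_bmul (A : Matrix (Fin n) (Fin n) L) : bMatMul idMat A = A := by
  ext i j
  rw [bMatMul_apply]
  apply le_antisymm
  · refine Finset.sup_le fun k _ => ?_
    by_cases h : i = k
    · subst h; simp [idMat]
    · simp [idMat, h]
  · have := Finset.le_sup (f := fun k => idMat (L := L) i k ⊓ A k j) (Finset.mem_univ i)
    simpa [idMat] using this

lemma bmul_id (A : Matrix (Fin n) (Fin n) L) : bMatMul A idMat = A := by
  ext i j
  rw [bMatMul_apply]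
  apply le_antisymm
  · refine Finset.sup_le fun k _ => ?_
    by_cases h : k = j
    · subst h; simp [idMat]
    · simp [idMat, h]
  · have := Finset.le_sup (f := fun k => A i k ⊓ idMat (L := L) k j) (Finset.mem_univ j)
    simpa [idMat] using this

lemma bmul_bot (A : Matrix (Fin n) (Fin n) L) : bMatMul A botMat = botMat := by
  ext i j
  rw [bMatMul_apply]
  simp [botMat]

lemma bot_bmul (A : Matrix (Fin n) (Fin n) L) : bMatMul botMat A = botMat := by
  ext i j
  rw [bMatMul_apply]
  simp [botMat]

lemma matPow_one (A : Matrix (Fin n) (Fin n) L) : matPow A 1 = A := by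
  show bMatMul (matPow A 0) A = A
  show bMatMul idMat A = A
  exact id_bmul A

lemma matPow_add (A : Matrix (Fin n) (Fin n) L) (s t : ℕ) :
    matPow A (s + t) = bMatMul (matPow A s) (matPow A t) := by
  induction t with
  | zero => simp [matPow, bmul_id]
  | succ t ih =>
      show bMatMul (matPow A (s + t)) A = bMatMul (matPow A s) (bMatMul (matPow A t) A)
      rw [ih, bmul_assoc]

lemma perm_bmul_apply (σ : Equiv.Perm (Fin n)) (A : Matrix (Fin n) (Fin n) L) (i j : Fin n) :
    bMatMul (permMat σ) A i j = A (σ i) j := by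
  rw [bMatMul_apply]
  apply le_antisymm
  · refine Finset.sup_le fun k _ => ?_
    by_cases h : k = σ i
    · subst h; simp [permMat]
    · simp [permMat, h]
  · have := Finset.le_sup (f := fun k => permMat (L := L) σ i k ⊓ A k j)
      (Finset.mem_univ (σ i))
    simpa [permMat] using this

lemma bmul_perm_apply (A : Matrix (Fin n) (Fin n) L) (π : Equiv.Perm (Fin n)) (i j : Fin n) :
    bMatMul A (permMat π) i j = A i (π.symm j) := by
  rw [bMatMul_apply]
  apply le_antisymm
  · refine Finset.sup_le fun k _ => ?_
    by_cases h : j = π k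
    · have hk : k = π.symm j := by simp [h]
      subst hk
      simp only [permMat, Matrix.of_apply, if_pos h, inf_top_eq]
      exact le_refl _
    · simp [permMat, h]
  · have := Finset.le_sup (f := fun k => A i k ⊓ permMat (L := L) π k j)
      (Finset.mem_univ (π.symm j))
    simpa [permMat] using this

lemma perm_bmul_perm (σ τ : Equiv.Perm (Fin n)) :
    bMatMul (permMat σ) (permMat τ) = (permMat (σ.trans τ) : Matrix (Fin n) (Fin n) L) := by
  ext i j
  rw [perm_bmul_apply]
  rfl

lemma perm_refl : (permMat (Equiv.refl (Fin n)) : Matrix (Fin n) (Fin n) L) = idMat := by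
  ext i j
  simp [permMat, idMat, eq_comm]

/-- Entries of powers of a strictly upper triangular matrix vanish quickly. -/
lemma sut_pow_entry {U : Matrix (Fin n) (Fin n) L} (hU : StrictUpperTri U) :
    ∀ m i j, matPow U (m + 1) i j ≠ ⊥ → (i : ℕ) + (m + 1) ≤ (j : ℕ) := by
  intro m
  induction m with
  | zero =>
      intro i j h
      rw [matPow_one] at h
      exact hU i j h
  | succ m ih =>
      intro i j h
      have : matPow U (m + 1 + 1) i j = Finset.univ.sup
          fun k => matPow U (m + 1) i k ⊓ U k j := rfl
      rw [this] at h
      obtain ⟨k, hk⟩ : ∃ k, matPow U (m + 1) i k ⊓ U k j ≠ ⊥ := by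
        by_contra hc
        push_neg at hc
        exact h ((Finset.sup_eq_bot_iff _ _).mpr fun k _ => hc k)
      have h1 : matPow U (m + 1) i k ≠ ⊥ := fun hb => hk (by simp [hb])
      have h2 : U k j ≠ ⊥ := fun hb => hk (by simp [hb])
      have := ih i k h1
      have := hU k j h2
      omega


lemma sut_pow_bot {U : Matrix (Fin n) (Fin n) L} (hU : StrictUpperTri U) :
    matPow U (n + 1) = botMat := by
  ext i j
  by_contra h
  have h' : matPow U (n + 1) i j ≠ ⊥ := fun hb => h (by simp [botMat, hb])
  have := sut_pow_entry hU n i j h'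
  omega

/-- Powers of a conjugated matrix. -/
lemma bconj_pow {A U C C' : Matrix (Fin n) (Fin n) L}
    (hCC' : bMatMul C C' = idMat) (hC'C : bMatMul C' C = idMat)
    (hA : A = bMatMul (bMatMul C' U) C) (k : ℕ) :
    matPow A k = bMatMul (bMatMul C' (matPow U k)) C := by
  induction k with
  | zero =>
      show idMat = bMatMul (bMatMul C' idMat) C
      rw [bmul_id, hC'C]
  | succ k ih =>
      show bMatMul (matPow A k) A = _
      rw [ih, hA]
      show _ = bMatMul (bMatMul C' (bMatMul (matPow U k) U)) C
      have hmid : bMatMul C (bMatMul (bMatMul C' U) C) = bMatMul U C := by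
        rw [← bmul_assoc C, ← bmul_assoc C C', hCC', id_bmul]
      rw [bmul_assoc (bMatMul C' (matPow U k)) C, hmid, ← bmul_assoc,
        bmul_assoc C' (matPow U k) U]

/-- A matrix conjugate to a strictly upper triangular matrix is nilpotent. -/
lemma conj_nilpotent {A U C C' : Matrix (Fin n) (Fin n) L} (hU : StrictUpperTri U)
    (hCC' : bMatMul C C' = idMat) (hC'C : bMatMul C' C = idMat)
    (hA : A = bMatMul (bMatMul C' U) C) :
    ∃ k : ℕ, 1 ≤ k ∧ matPow A k = botMat := by
  refine ⟨n + 1, Nat.le_add_left 1 n, ?_⟩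
  rw [bconj_pow hCC' hC'C hA, sut_pow_bot hU, bmul_bot, bot_bmul]

lemma transGen_pow {A : Matrix (Fin n) (Fin n) L}
    (h0 : ∀ a b : L, a ⊓ b = ⊥ → a = ⊥ ∨ b = ⊥) {a b : Fin n}
    (h : Relation.TransGen (fun i j => A i j ≠ ⊥) a b) :
    ∃ m : ℕ, 1 ≤ m ∧ matPow A m a b ≠ ⊥ := by
  induction h with
  | single hr => exact ⟨1, le_refl 1, by rwa [matPow_one]⟩
  | tail _ hr ih =>
      obtain ⟨m, hm, hmb⟩ := ih
      rename_i c d _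
      refine ⟨m + 1, Nat.le_succ_of_le hm, fun hb => ?_⟩
      have : matPow A (m + 1) a d = Finset.univ.sup
          fun k => matPow A m a k ⊓ A k d := rfl
      rw [this] at hb
      have hterm : matPow A m a c ⊓ A c d = ⊥ :=
        le_bot_iff.mp (hb ▸ Finset.le_sup (f := fun k => matPow A m a k ⊓ A k d)
          (Finset.mem_univ c))
      rcases h0 _ _ hterm with h' | h'
      · exact hmb h'
      · exact hr h'

/-- A nilpotent matrix has no cycles. -/
lemma nilpotent_irrefl {A : Matrix (Fin n) (Fin n) L}
    (h0 : ∀ a b : L, a ⊓ b = ⊥ → a = ⊥ ∨ b = ⊥)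
    {k : ℕ} (hk1 : 1 ≤ k) (hk : matPow A k = botMat) :
    Irreflexive (Relation.TransGen (fun i j => A i j ≠ ⊥)) := by
  intro a ha
  obtain ⟨m, hm1, hm⟩ := transGen_pow h0 ha
  -- pump: for all t ≥ 1, matPow A (t * m) a a ≠ ⊥
  have pump : ∀ t : ℕ, matPow A ((t + 1) * m) a a ≠ ⊥ := by
    intro t
    induction t with
    | zero => simpa using hm
    | succ t ih =>
        have heq : (t + 1 + 1) * m = (t + 1) * m + m := by ring
        rw [heq, matPow_add]
        intro hb
        have : (Finset.univ.sup fun l => matPow A ((t + 1) * m) a l ⊓ matPow A m l a) = ⊥ := hb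
        have hterm : matPow A ((t + 1) * m) a a ⊓ matPow A m a a = ⊥ :=
          le_bot_iff.mp (this ▸ Finset.le_sup
            (f := fun l => matPow A ((t + 1) * m) a l ⊓ matPow A m l a)
            (Finset.mem_univ a))
        rcases h0 _ _ hterm with h' | h'
        · exact ih h'
        · exact hm h'
  have hge : k ≤ k * m := Nat.le_mul_of_pos_right k hm1
  have hsplit : k * m = k + (k * m - k) := by omega
  have hbot : matPow A (k * m) = botMat := by
    rw [hsplit, matPow_add, hk, bot_bmul]
  have hkm : matPow A (k * m) a a ≠ ⊥ := by
    have hk' : k - 1 + 1 = k := Nat.sub_add_cancel hk1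
    have := pump (k - 1)
    rwa [hk'] at this
  exact hkm (by rw [hbot]; rfl)

end Lemmas

/-- Over a bounded distributive lattice whose bottom element is meet-irreducible, a matrix
`A` is nilpotent iff it is conjugate to a strictly upper triangular matrix (`A = C⁻¹ U C`
with `C` invertible and `U` strictly upper triangular); equivalently, iff there is a
permutation `π` such that `P_π⁻¹ A P_π` is strictly upper triangular. -/
theorem nilpotent_iff_conjugate_strictUpperTri {L : Type*} [DistribLattice L]
    [BoundedOrder L] (h0 : ∀ a b : L, a ⊓ b = ⊥ → a = ⊥ ∨ b = ⊥)
    {n : ℕ} (A : Matrix (Fin n) (Fin n) L) :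
    ((∃ k : ℕ, 1 ≤ k ∧ matPow A k = botMat) ↔
      ∃ U C C' : Matrix (Fin n) (Fin n) L, StrictUpperTri U ∧
        bMatMul C C' = idMat ∧ bMatMul C' C = idMat ∧
        A = bMatMul (bMatMul C' U) C) ∧
    ((∃ k : ℕ, 1 ≤ k ∧ matPow A k = botMat) ↔
      ∃ π : Equiv.Perm (Fin n),
        StrictUpperTri (bMatMul (bMatMul (permMat π.symm) A) (permMat π))) := by
  classical
  -- invertibility of permutation matrices
  have hCC' : ∀ π : Equiv.Perm (Fin n),
      bMatMul (permMat π.symm) (permMat π) = (idMat : Matrix (Fin n) (Fin n) L) := by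
    intro π
    rw [perm_bmul_perm, Equiv.symm_trans_self, perm_refl]
  have hC'C : ∀ π : Equiv.Perm (Fin n),
      bMatMul (permMat π) (permMat π.symm) = (idMat : Matrix (Fin n) (Fin n) L) := by
    intro π
    rw [perm_bmul_perm, Equiv.self_trans_symm, perm_refl]
  -- A is the conjugate of its permutation conjugate
  have hconj : ∀ π : Equiv.Perm (Fin n),
      A = bMatMul (bMatMul (permMat π)
        (bMatMul (bMatMul (permMat π.symm) A) (permMat π))) (permMat π.symm) := by
    intro π
    ext i j
    rw [bmul_perm_apply, perm_bmul_apply, bmul_perm_apply, perm_bmul_apply]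
    simp
  -- nilpotent implies permutation conjugate is strictly upper triangular
  have main : (∃ k : ℕ, 1 ≤ k ∧ matPow A k = botMat) →
      ∃ π : Equiv.Perm (Fin n),
        StrictUpperTri (bMatMul (bMatMul (permMat π.symm) A) (permMat π)) := by
    rintro ⟨k, hk1, hk⟩
    obtain ⟨π, hπ⟩ := topo_sort (fun i j => A i j ≠ ⊥) (nilpotent_irrefl h0 hk1 hk)
    refine ⟨π, fun i j hij => ?_⟩
    rw [bmul_perm_apply, perm_bmul_apply] at hij
    have := hπ _ _ hij
    simpa using this
  refine ⟨⟨?_, ?_⟩, ⟨main, ?_⟩⟩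
  · intro h
    obtain ⟨π, hπ⟩ := main h
    exact ⟨bMatMul (bMatMul (permMat π.symm) A) (permMat π), permMat π.symm, permMat π,
      hπ, hCC' π, hC'C π, hconj π⟩
  · rintro ⟨U, C, C', hU, h1, h2, h3⟩
    exact conj_nilpotent hU h1 h2 h3
  · rintro ⟨π, hπ⟩
    exact conj_nilpotent hπ (hCC' π) (hC'C π) (hconj π)
end
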